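/- arXiv:1303.6985 — 12 statements merged into one kernel-verified Lean document; each statement's English description precedes it below -/
import Mathlib

section
/- Let α, β, k₀, k₁, k₂, k₃ be nonnegative integers with k₀ ≤ α and k₁ + k₂ + k₃ ≤ β. Then, as natural numbers, the product D₁·D₂·D₃·D₄ divides the product N₁·N₂·N₃·N₄, where N₁ = ∏_{i=0}^{k₀−1} ((2^α − 2^i)·2^β), N₂ = ∏_{i=0}^{k₁−1} ((8^β − 4^β·2^i)·2^α), N₃ = ∏_{i=0}^{k₂−1} ((4^β − 2^{β+k₁+i})·2^α), N₄ = ∏_{i=0}^{k₃−1} (2^β − 2^{k₁+k₂+i}), D₁ = ∏_{i=0}^{k₀−1} (2^{k₀+k₁+k₂+k₃} − 2^{k₁+k₂+k₃+i}), D₂ = ∏_{i=0}^{k₁−1} ((8^{k₁} − 4^{k₁}·2^i)·2^{k₀+2k₂+k₃}), D₃ = ∏_{i=0}^{k₂−1} ((4^{k₂} − 2^{k₂+i})·2^{k₀+2k₁+k₃}), D₄ = ∏_{i=0}^{k₃−1} (2^{k₁+k₂+k₃} − 2^{k₁+k₂+i}); empty products are 1. -/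
open Finset

/-!
Factor by factor, each block `Dⱼ` is `x (2^k - 2^i)` and the matching `Nⱼ` is `y (2^a - 2^i)`,
with powers of two `x ∣ y` and `k ≤ a`. The quotient `∏_{i<k} (2^a - 2^i) / ∏_{i<k} (2^k - 2^i)`
is the Gaussian binomial coefficient `[a choose k]_2`. Its integrality is the `q`-analogue of
`k! m! ∣ (k + m)!`, proved by induction from the `q`-Pascal rule `[m + n]_q = [m]_q + q^m [n]_q`
for the `q`-integers `[n]_q = ∑_{j<n} q^j`, which satisfy `(q - 1) [n]_q = q^n - 1`.
-/

def qInt (q n : ℕ) : ℕ := ∑ j ∈ range n, q ^ j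

def qFactorial (q n : ℕ) : ℕ := ∏ j ∈ range n, qInt q (j + 1)

lemma qInt_add (q m n : ℕ) : qInt q (m + n) = qInt q m + q ^ m * qInt q n := by
  simp only [qInt, sum_range_add, pow_add, mul_sum]

lemma qInt_succ_pos (q n : ℕ) : 0 < qInt q (n + 1) := by
  simp [qInt, sum_range_succ']

lemma sub_one_mul_qInt (q n : ℕ) : (q - 1) * qInt q n = q ^ n - 1 := by
  rcases q with _ | p
  · cases n <;> simp
  · have h := geom_sum_mul_add p n
    rw [qInt, Nat.add_sub_cancel, mul_comm]
    omega

lemma pow_sub_pow_eq_mul_qInt (q : ℕ) {i a : ℕ} (h : i ≤ a) :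
    q ^ a - q ^ i = q ^ i * (q - 1) * qInt q (a - i) := by
  rw [mul_assoc, sub_one_mul_qInt, Nat.mul_sub, mul_one, ← pow_add, Nat.add_sub_cancel' h]

lemma qFactorial_zero (q : ℕ) : qFactorial q 0 = 1 := rfl

lemma qFactorial_succ (q n : ℕ) : qFactorial q (n + 1) = qFactorial q n * qInt q (n + 1) :=
  prod_range_succ _ n

lemma qFactorial_pos (q n : ℕ) : 0 < qFactorial q n :=
  prod_pos fun j _ => qInt_succ_pos q j

theorem qFactorial_mul_qFactorial_dvd (q k m : ℕ) :
    qFactorial q k * qFactorial q m ∣ qFactorial q (k + m) := by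
  induction k generalizing m with
  | zero => simp [qFactorial_zero]
  | succ k ihk =>
    induction m with
    | zero => simp [qFactorial_zero]
    | succ m ihm =>
      have pascal : qInt q (k + 1 + m + 1) = qInt q (m + 1) + q ^ (m + 1) * qInt q (k + 1) := by
        rw [show k + 1 + m + 1 = m + 1 + (k + 1) by omega, qInt_add]
      rw [← add_assoc, qFactorial_succ q (k + 1 + m), pascal, mul_add]
      refine dvd_add ?_ ?_
      · rw [qFactorial_succ q m, ← mul_assoc]
        exact mul_dvd_mul ihm dvd_rfl
      · rw [mul_left_comm, qFactorial_succ q k, mul_right_comm,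
          show k + 1 + m = k + (m + 1) by omega]
        exact (mul_dvd_mul (ihk (m + 1)) dvd_rfl).mul_left _

lemma qFactorial_add_eq_mul_prod (q n k : ℕ) :
    qFactorial q (n + k) = qFactorial q n * ∏ i ∈ range k, qInt q (n + k - i) := by
  induction k with
  | zero => simp
  | succ k ih =>
    rw [← add_assoc, qFactorial_succ, ih, prod_range_succ', mul_assoc]
    simp only [Nat.add_sub_add_right, Nat.sub_zero]

theorem qFactorial_dvd_prod_qInt (q n k : ℕ) :
    qFactorial q k ∣ ∏ i ∈ range k, qInt q (n + k - i) := by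
  have h := qFactorial_mul_qFactorial_dvd q k n
  rw [add_comm, qFactorial_add_eq_mul_prod, mul_comm] at h
  exact Nat.dvd_of_mul_dvd_mul_left (qFactorial_pos q n) h

lemma prod_pow_sub_pow_eq (q : ℕ) {k a : ℕ} (h : k ≤ a) :
    ∏ i ∈ range k, (q ^ a - q ^ i) =
      (∏ i ∈ range k, q ^ i * (q - 1)) * ∏ i ∈ range k, qInt q (a - i) := by
  rw [← prod_mul_distrib]
  exact prod_congr rfl fun i hi => pow_sub_pow_eq_mul_qInt q ((mem_range.mp hi).le.trans h)

theorem prod_pow_sub_pow_dvd (q : ℕ) {k a : ℕ} (h : k ≤ a) :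
    ∏ i ∈ range k, (q ^ k - q ^ i) ∣ ∏ i ∈ range k, (q ^ a - q ^ i) := by
  obtain ⟨n, rfl⟩ := Nat.exists_eq_add_of_le' h
  rw [prod_pow_sub_pow_eq q le_rfl, prod_pow_sub_pow_eq q h]
  refine mul_dvd_mul_left _ ?_
  have h_self : ∏ i ∈ range k, qInt q (k - i) = qFactorial q k := by
    simpa [qFactorial_zero] using (qFactorial_add_eq_mul_prod q 0 k).symm
  exact h_self ▸ qFactorial_dvd_prod_qInt q n k

theorem prod_dvd_prod_of_eq_mul_pow_sub_pow (q : ℕ) {x y k a : ℕ} {f g : ℕ → ℕ} (hxy : x ∣ y)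
    (hka : k ≤ a) (hf : ∀ i, f i = x * (q ^ k - q ^ i)) (hg : ∀ i, g i = y * (q ^ a - q ^ i)) :
    ∏ i ∈ range k, f i ∣ ∏ i ∈ range k, g i := by
  simp only [hf, hg, prod_mul_distrib]
  exact mul_dvd_mul (prod_dvd_prod_of_dvd _ _ fun _ _ => hxy) (prod_pow_sub_pow_dvd q hka)

/-- The denominator product `D₁·D₂·D₃·D₄` of the Mixed Generalized Gaussian Number divides
its numerator product `N₁·N₂·N₃·N₄` as natural numbers. -/
theorem MGN_denom_dvd_num (α β k₀ k₁ k₂ k₃ : ℕ) (h₀ : k₀ ≤ α) (h : k₁ + k₂ + k₃ ≤ β) :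
    ((∏ i ∈ range k₀, (2 ^ (k₀ + k₁ + k₂ + k₃) - 2 ^ (k₁ + k₂ + k₃ + i))) *
     (∏ i ∈ range k₁, ((8 ^ k₁ - 4 ^ k₁ * 2 ^ i) * 2 ^ (k₀ + 2 * k₂ + k₃))) *
     (∏ i ∈ range k₂, ((4 ^ k₂ - 2 ^ (k₂ + i)) * 2 ^ (k₀ + 2 * k₁ + k₃))) *
     (∏ i ∈ range k₃, (2 ^ (k₁ + k₂ + k₃) - 2 ^ (k₁ + k₂ + i)))) ∣
    ((∏ i ∈ range k₀, ((2 ^ α - 2 ^ i) * 2 ^ β)) *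
     (∏ i ∈ range k₁, ((8 ^ β - 4 ^ β * 2 ^ i) * 2 ^ α)) *
     (∏ i ∈ range k₂, ((4 ^ β - 2 ^ (β + k₁ + i)) * 2 ^ α)) *
     (∏ i ∈ range k₃, (2 ^ β - 2 ^ (k₁ + k₂ + i)))) := by
  obtain ⟨s, rfl⟩ := Nat.exists_eq_add_of_le h₀
  obtain ⟨t, rfl⟩ := Nat.exists_eq_add_of_le h
  have h8 : ∀ n, (8 : ℕ) ^ n = 2 ^ (3 * n) := fun n => by rw [pow_mul]; rfl
  have h4 : ∀ n, (4 : ℕ) ^ n = 2 ^ (2 * n) := fun n => by rw [pow_mul]; rfl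
  simp only [h8, h4]
  -- with `α` and `β` written as sums, each factor identity is a ring identity once the
  -- truncated subtractions are distributed
  refine mul_dvd_mul (mul_dvd_mul (mul_dvd_mul
    (prod_dvd_prod_of_eq_mul_pow_sub_pow 2 (a := k₀ + s)
      (x := 2 ^ (k₁ + k₂ + k₃)) (y := 2 ^ (k₁ + k₂ + k₃ + t)) ?_ ?_ ?_ ?_)
    (prod_dvd_prod_of_eq_mul_pow_sub_pow 2 (a := k₁ + k₂ + k₃ + t)
      (x := 2 ^ (k₀ + 2 * k₁ + 2 * k₂ + k₃)) (y := 2 ^ (k₀ + s + 2 * (k₁ + k₂ + k₃ + t)))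
      ?_ ?_ ?_ ?_))
    (prod_dvd_prod_of_eq_mul_pow_sub_pow 2 (a := k₂ + k₃ + t)
      (x := 2 ^ (k₀ + 2 * k₁ + k₂ + k₃)) (y := 2 ^ (k₀ + s + 2 * k₁ + k₂ + k₃ + t)) ?_ ?_ ?_ ?_))
    (prod_dvd_prod_of_eq_mul_pow_sub_pow 2 (a := k₃ + t)
      (x := 2 ^ (k₁ + k₂)) (y := 2 ^ (k₁ + k₂)) ?_ ?_ ?_ ?_)
  all_goals first
    | exact pow_dvd_pow 2 (by omega)
    | omega
    | intro i; simp only [Nat.sub_mul, Nat.mul_sub]; congr 1 <;> ring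
end

section
/- Let n, k₁, k₂, k₃ be nonnegative integers with k₁ + k₂ + k₃ ≤ n, and set r = n − (k₁ + k₂ + k₃). Then the number of additive subgroups of (ZMod 8)^n that are isomorphic as abelian groups to (ZMod 8)^{k₁} × (ZMod 4)^{k₂} × (ZMod 2)^{k₃}, multiplied by 2^r, equals N(1,n;1,k₁,k₂,k₃). -/
open Finset

/-- The Mixed Generalized Gaussian Number `N(α,β;k₀,k₁,k₂,k₃)`. -/
def MGN (a b k₀ k₁ k₂ k₃ : ℕ) : ℚ :=
  ((∏ i ∈ range k₀, ((2 ^ a - 2 ^ i : ℚ) * 2 ^ b)) *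
   (∏ i ∈ range k₁, ((8 ^ b - 4 ^ b * 2 ^ i : ℚ) * 2 ^ a)) *
   (∏ i ∈ range k₂, ((4 ^ b - 2 ^ (b + k₁ + i) : ℚ) * 2 ^ a)) *
   (∏ i ∈ range k₃, (2 ^ b - 2 ^ (k₁ + k₂ + i) : ℚ))) /
  ((∏ i ∈ range k₀, (2 ^ (k₀ + k₁ + k₂ + k₃) - 2 ^ (k₁ + k₂ + k₃ + i) : ℚ)) *
   (∏ i ∈ range k₁, ((8 ^ k₁ - 4 ^ k₁ * 2 ^ i : ℚ) * 2 ^ (k₀ + 2 * k₂ + k₃))) *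
   (∏ i ∈ range k₂, ((4 ^ k₂ - 2 ^ (k₂ + i) : ℚ) * 2 ^ (k₀ + 2 * k₁ + k₃))) *
   (∏ i ∈ range k₃, (2 ^ (k₁ + k₂ + k₃) - 2 ^ (k₁ + k₂ + i) : ℚ)))

/-!
A subgroup `C ≤ G` isomorphic to `H` is the image of exactly `|Aut H|` injective homomorphisms
`H → G`, so the number of such subgroups is `#{H ↪ G} / #{H ↪ H}`. Injective homomorphisms out of
`ZMod m × H` are counted one cyclic factor at a time: if `m = p * c` and `c` lies in every nonzero
subgroup of `ZMod m`, an embedding `f` of `H` extends by `1 ↦ x` exactly when `x ∈ K[m]` and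
`c • x ∉ f(H)`; when `H[p] ≤ c • H` there are `|K[m]| - |K[c]| * |H[p]|` such `x`. For
`H = ℤ₈^k₁ × ℤ₄^k₂ × ℤ₂^k₃` this gives a product formula in `|K[8]|, |K[4]|, |K[2]|`, and
`N(1,n;1,k₁,k₂,k₃)` is `2^r` times the quotient of its values at `K = ℤ₈ⁿ` and `K = H`.
-/

open Function AddSubgroup

section Torsion

variable {G H : Type*} [AddCommGroup G] [AddCommGroup H]

lemma torsionBy_eq_ker_nsmulAddMonoidHom (n : ℕ) : H[n] = (nsmulAddMonoidHom n).ker := by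
  ext x
  simp

lemma card_torsionBy_prod (n : ℤ) : Nat.card (G × H)[n] = Nat.card G[n] * Nat.card H[n] := by
  rw [← Nat.card_prod]
  refine Nat.card_congr ((Equiv.subtypeEquivRight fun x => ?_).trans Equiv.subtypeProdEquivProd)
  simp [Prod.ext_iff]

lemma card_torsionBy_pi {ι : Type*} [Finite ι] (n : ℤ) :
    Nat.card (ι → H)[n] = Nat.card H[n] ^ Nat.card ι := by
  rw [← Nat.card_fun]
  refine Nat.card_congr ((Equiv.subtypeEquivRight fun x => ?_).trans Equiv.subtypePiEquivPi)
  simp [funext_iff]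

lemma card_torsionBy_one : Nat.card H[1] = 1 := by
  simp

lemma card_torsionBy_zmod (m : ℕ) [NeZero m] (d : ℤ) :
    Nat.card (ZMod m)[d] = m.gcd d.natAbs := by
  have hd : (ZMod m)[d] = (ZMod m)[d.natAbs] := by
    rcases Int.natAbs_eq d with h | h <;> rw [h] <;> simp [torsionBy.neg]
  rw [hd, torsionBy_eq_ker_nsmulAddMonoidHom, IsAddCyclic.card_nsmulAddMonoidHom_ker,
    Nat.card_zmod]

variable {p c : ℕ}

lemma prod_torsionBy_le_range_nsmul (hG : G[p] ≤ (nsmulAddMonoidHom c).range)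
    (hH : H[p] ≤ (nsmulAddMonoidHom c).range) :
    (G × H)[p] ≤ (nsmulAddMonoidHom c).range := by
  intro x hx
  rw [torsionBy.nsmul_iff, Prod.ext_iff] at hx
  obtain ⟨a, ha⟩ := hG (torsionBy.nsmul_iff.2 hx.1)
  obtain ⟨b, hb⟩ := hH (torsionBy.nsmul_iff.2 hx.2)
  exact ⟨(a, b), Prod.ext ha hb⟩

lemma pi_torsionBy_le_range_nsmul {ι : Type*} (hH : H[p] ≤ (nsmulAddMonoidHom c).range) :
    (ι → H)[p] ≤ (nsmulAddMonoidHom c).range := by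
  intro x hx
  rw [torsionBy.nsmul_iff, funext_iff] at hx
  choose y hy using fun i => hH (torsionBy.nsmul_iff.2 (hx i))
  exact ⟨y, funext hy⟩

lemma zmod_torsionBy_le_range_nsmul {m : ℕ} (hp : p ≠ 0) (hpc : p * c ∣ m) :
    (ZMod m)[p] ≤ (nsmulAddMonoidHom c).range := by
  intro x hx
  obtain ⟨z, rfl⟩ := ZMod.intCast_surjective x
  rw [torsionBy.nsmul_iff, nsmul_eq_mul, ← Int.cast_natCast, ← Int.cast_mul,
    ZMod.intCast_zmod_eq_zero_iff_dvd] at hx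
  obtain ⟨j, rfl⟩ : (c : ℤ) ∣ z := Int.dvd_of_mul_dvd_mul_left (by exact_mod_cast hp)
    ((Int.natCast_dvd_natCast.2 hpc).trans hx)
  exact ⟨j, by simp [nsmul_eq_mul]⟩

end Torsion

section Counting

variable {G H K : Type*} [AddCommGroup G] [AddCommGroup H] [AddCommGroup K]

def zmodAddMonoidHomEquiv (m : ℕ) : (ZMod m →+ K) ≃ K[m] where
  toFun g := ⟨g 1, by rw [torsionBy.nsmul_iff, ← map_nsmul, nsmul_one, ZMod.natCast_self, map_zero]⟩
  invFun x := ZMod.lift m ⟨zmultiplesHom K x, by simp⟩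
  left_inv g := by
    rw [← Equiv.eq_symm_apply]
    ext
    simp only [zmultiplesHom_apply, one_zsmul]
    exact (congrArg g Int.cast_one).symm
  right_inv x := by
    ext
    simpa using ZMod.lift_coe m ⟨zmultiplesHom K x, _⟩ 1

lemma card_comap_of_le_range [Finite G] (φ : G →+ K) {S : AddSubgroup K} (hS : S ≤ φ.range) :
    Nat.card (S.comap φ) = Nat.card φ.ker * Nat.card S := by
  set ψ := φ.domRestrict (S.comap φ)
  have hker : Nat.card ψ.ker = Nat.card φ.ker := by
    rw [AddMonoidHom.ker_domRestrict]
    exact Nat.card_congr (addSubgroupOfEquivOfLe (ker_le_comap φ S)).toEquiv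
  have hrange : ψ.range = S := by
    rw [AddMonoidHom.domRestrict_range, map_comap_eq, inf_eq_right.2 hS]
  rw [← index_mul_card ψ.ker, index_ker, hrange, hker, mul_comm]

lemma card_injective_congr (e : G ≃+ H) :
    Nat.card {f : H →+ K // Injective f} = Nat.card {f : G →+ K // Injective f} :=
  Nat.card_congr <| .symm <| e.addMonoidHomCongrLeftEquiv.subtypeEquiv fun f => by
    simp [EquivLike.injective_comp]

end Counting

section Extension

variable {H K : Type*} [AddCommGroup H] [AddCommGroup K] {m p c : ℕ}

lemma injective_coprod_iff [NeZero m] (hc : (c : ZMod m) ≠ 0)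
    (hmin : ∀ t : ZMod m, t ≠ 0 → ∃ w : ZMod m, w * t = c) (g : ZMod m →+ K) (f : H →+ K) :
    Injective (g.coprod f) ↔ Injective f ∧ c • g 1 ∉ f.range := by
  have hg (n : ℕ) : g n = n • g 1 := by rw [← map_nsmul, nsmul_one]
  constructor
  · intro hF
    refine ⟨fun a b hab => (Prod.ext_iff.1 (@hF (0, a) (0, b) (by simpa using hab))).2, ?_⟩
    rintro ⟨h, hh⟩
    have : ((c : ZMod m), -h) = 0 := hF <| by simp [hg, hh]
    exact hc (Prod.ext_iff.1 this).1
  · rintro ⟨hf, hcf⟩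
    rw [injective_iff_map_eq_zero]
    rintro ⟨t, h⟩ hth
    change g t + f h = 0 at hth
    obtain rfl | ht := eq_or_ne t 0
    · simp [(injective_iff_map_eq_zero f).1 hf h (by simpa using hth)]
    obtain ⟨w, hw⟩ := hmin t ht
    refine absurd ⟨-(w.val • h), ?_⟩ hcf
    calc f (-(w.val • h)) = w.val • g t := by
          rw [map_neg, map_nsmul, eq_neg_of_add_eq_zero_left hth, smul_neg]
      _ = g (w * t) := by rw [← map_nsmul, nsmul_eq_mul, ZMod.natCast_zmod_val]
      _ = c • g 1 := by rw [hw, hg]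

lemma card_nsmul_mem_range_of_torsionBy_le (hm : m = p * c) [Finite K]
    (hH : H[p] ≤ (nsmulAddMonoidHom c).range) {f : H →+ K} (hf : Injective f) :
    Nat.card {x : K[m] // c • (x : K) ∈ f.range} = Nat.card K[c] * Nat.card H[p] := by
  set S := (H[p]).map f
  have hS : S ≤ (nsmulAddMonoidHom c).range := by
    rintro _ ⟨h, hh, rfl⟩
    obtain ⟨h', rfl⟩ := hH hh
    exact ⟨f h', by simp⟩
  have hmem (x : K) : x ∈ K[m] ∧ c • x ∈ f.range ↔ x ∈ S.comap (nsmulAddMonoidHom c) := by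
    simp only [S, mem_comap, AddSubgroup.mem_map, AddMonoidHom.mem_range, torsionBy.nsmul_iff,
      nsmulAddMonoidHom_apply]
    constructor
    · rintro ⟨hx, h, hh⟩
      refine ⟨h, hf ?_, hh⟩
      rw [map_nsmul, hh, smul_smul, ← hm, hx, map_zero]
    · rintro ⟨h, hp, hh⟩
      refine ⟨?_, h, hh⟩
      rw [hm, mul_comm, mul_nsmul, ← hh, ← map_nsmul, hp, map_zero]
  rw [Nat.card_congr ((Equiv.subtypeSubtypeEquivSubtypeInter _ _).trans
    (Equiv.subtypeEquivRight hmem)), card_comap_of_le_range _ hS,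
    ← torsionBy_eq_ker_nsmulAddMonoidHom, card_map_of_injective hf]

lemma card_nsmul_notMem_range_of_torsionBy_le (hm : m = p * c) [Finite K]
    (hH : H[p] ≤ (nsmulAddMonoidHom c).range) {f : H →+ K} (hf : Injective f) :
    (Nat.card {x : K[m] // c • (x : K) ∉ f.range} : ℤ) =
      Nat.card K[m] - Nat.card K[c] * Nat.card H[p] := by
  classical
  have := Nat.card_congr (Equiv.sumCompl fun x : K[m] => c • (x : K) ∈ f.range)
  rw [Nat.card_sum, card_nsmul_mem_range_of_torsionBy_le hm hH hf] at this
  omega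

theorem card_injective_zmod_prod [NeZero m] (hm : m = p * c) (hc : (c : ZMod m) ≠ 0)
    (hmin : ∀ t : ZMod m, t ≠ 0 → ∃ w : ZMod m, w * t = c)
    (hH : H[p] ≤ (nsmulAddMonoidHom c).range) [Finite H] [Finite K] :
    (Nat.card {F : ZMod m × H →+ K // Injective F} : ℤ) =
      Nat.card {f : H →+ K // Injective f} * (Nat.card K[m] - Nat.card K[c] * Nat.card H[p]) := by
  have : Finite (H →+ K) := Finite.of_injective _ DFunLike.coe_injective
  have := Fintype.ofFinite {f : H →+ K // Injective f}
  have hF (F : ZMod m × H →+ K) : Injective F ↔ Injective (F.comp (.inr _ _)) ∧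
      c • F.comp (.inl _ _) 1 ∉ (F.comp (.inr _ _)).range := by
    rw [← injective_coprod_iff hc hmin, F.coprod_unique]
  let restrict : {F : ZMod m × H →+ K // Injective F} ≃
      {q : {f : H →+ K // Injective f} × (ZMod m →+ K) // c • q.2 1 ∉ q.1.1.range} :=
    { toFun F := ⟨(⟨F.1.comp (.inr _ _), ((hF F).1 F.2).1⟩, F.1.comp (.inl _ _)), ((hF F).1 F.2).2⟩
      invFun q := ⟨q.1.2.coprod q.1.1.1, (injective_coprod_iff hc hmin _ _).2 ⟨q.1.1.2, q.2⟩⟩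
      left_inv F := Subtype.ext F.1.coprod_unique
      right_inv q := Subtype.ext <| Prod.ext (Subtype.ext (AddMonoidHom.coprod_comp_inr _ _))
        (AddMonoidHom.coprod_comp_inl _ _) }
  let extension (f : {f : H →+ K // Injective f}) :
      {g : ZMod m →+ K // c • g 1 ∉ f.1.range} ≃ {x : K[m] // c • (x : K) ∉ f.1.range} :=
    Equiv.subtypeEquiv (zmodAddMonoidHomEquiv m) fun _ => Iff.rfl
  rw [Nat.card_congr (restrict.trans ((Equiv.subtypeProdEquivSigmaSubtype _).trans
      (Equiv.sigmaCongrRight extension))),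
    Nat.card_sigma, Nat.cast_sum, Finset.sum_congr rfl fun f _ =>
      card_nsmul_notMem_range_of_torsionBy_le hm hH f.2,
    Finset.sum_const, Finset.card_univ, nsmul_eq_mul, Fintype.card_eq_nat_card]

theorem card_injective_pi_prod [NeZero m] (hm : m = p * c) (hc : (c : ZMod m) ≠ 0)
    (hmin : ∀ t : ZMod m, t ≠ 0 → ∃ w : ZMod m, w * t = c)
    (hH : H[p] ≤ (nsmulAddMonoidHom c).range) [Finite H] [Finite K] (k : ℕ) :
    (Nat.card {F : (Fin k → ZMod m) × H →+ K // Injective F} : ℤ) =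
      Nat.card {f : H →+ K // Injective f} * ∏ i ∈ range k,
        ((Nat.card K[m] : ℤ) - Nat.card K[c] * (p ^ i * Nat.card H[p])) := by
  have hp : p ≠ 0 := by rintro rfl; exact NeZero.ne m (by simpa using hm)
  have hZ : (ZMod m)[p] ≤ (nsmulAddMonoidHom c).range :=
    zmod_torsionBy_le_range_nsmul hp hm.symm.dvd
  have hZp : Nat.card (ZMod m)[p] = p := by
    rw [card_torsionBy_zmod, Int.natAbs_natCast, Nat.gcd_eq_right (Dvd.intro c hm.symm)]
  induction k with
  | zero => simp [card_injective_congr (AddEquiv.uniqueProd (M := H) (N := Fin 0 → ZMod m))]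
  | succ k ih =>
    let e : (Fin (k + 1) → ZMod m) × H ≃+ ZMod m × ((Fin k → ZMod m) × H) :=
      ((Fin.consLinearEquiv ℕ fun _ => ZMod m).toAddEquiv.symm.prodCongr (.refl H)).trans
        AddEquiv.prodAssoc
    rw [card_injective_congr e.symm, card_injective_zmod_prod hm hc hmin
      (prod_torsionBy_le_range_nsmul (pi_torsionBy_le_range_nsmul hZ) hH), ih,
      card_torsionBy_prod, card_torsionBy_pi, Nat.card_fin, hZp, prod_range_succ]
    push_cast
    ring

end Extension

section Subgroups

variable (G H : Type*) [AddCommGroup G] [AddCommGroup H]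

theorem card_addSubgroup_addEquiv_mul_card_addAut :
    Nat.card {C : AddSubgroup G // Nonempty (C ≃+ H)} * Nat.card (H ≃+ H) =
      Nat.card {f : H →+ G // Injective f} := by
  let image (f : {f : H →+ G // Injective f}) : {C : AddSubgroup G // Nonempty (C ≃+ H)} :=
    ⟨f.1.range, ⟨(AddMonoidHom.ofInjective f.2).symm⟩⟩
  let fiber (C : {C : AddSubgroup G // Nonempty (C ≃+ H)}) : {f // image f = C} ≃ (H ≃+ C.1) :=
    { toFun f := (AddMonoidHom.ofInjective f.1.2).trans
        (AddEquiv.addSubgroupCongr (congrArg Subtype.val f.2))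
      invFun e := ⟨⟨C.1.subtype.comp e.toAddMonoidHom, C.1.subtype_injective.comp e.injective⟩,
        Subtype.ext <| le_antisymm (by rintro _ ⟨y, rfl⟩; exact (e y).2)
          fun x hx => ⟨e.symm ⟨x, hx⟩, by simp⟩⟩
      left_inv f := rfl
      right_inv e := by ext; rfl }
  let transport (C : {C : AddSubgroup G // Nonempty (C ≃+ H)}) : (H ≃+ C.1) ≃ (H ≃+ H) :=
    { toFun u := u.trans C.2.some
      invFun v := v.trans C.2.some.symm
      left_inv u := by ext; simp
      right_inv v := by ext; simp }
  rw [← Nat.card_prod, Nat.card_congr (Equiv.sigmaFiberEquiv image).symm]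
  exact Nat.card_congr ((Equiv.sigmaCongrRight fun C => (fiber C).trans (transport C)).trans
    (Equiv.sigmaEquivProd _ _)).symm

theorem card_addAut_eq_card_injective [Finite H] :
    Nat.card (H ≃+ H) = Nat.card {f : H →+ H // Injective f} :=
  Nat.card_congr
    { toFun e := ⟨e, e.injective⟩
      invFun f := AddEquiv.ofBijective f.1 (Finite.injective_iff_bijective.1 f.2)
      left_inv e := by ext; rfl
      right_inv f := rfl }

end Subgroups

/-- With `a = |K[8]|`, `b = |K[4]|`, `c = |K[2]|`, this is the number of injective homomorphisms
`ℤ₈^k₁ × ℤ₄^k₂ × ℤ₂^k₃ → K`. -/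
def embeddingCount (a b c : ℤ) (k₁ k₂ k₃ : ℕ) : ℤ :=
  (∏ i ∈ range k₁, (a - b * 2 ^ i)) * (∏ j ∈ range k₂, (b - c * 2 ^ (k₁ + j))) *
    ∏ l ∈ range k₃, (c - 2 ^ (k₁ + k₂ + l))

theorem card_injective_eq_embeddingCount (K : Type*) [AddCommGroup K] [Finite K]
    (k₁ k₂ k₃ : ℕ) :
    (Nat.card {f : (Fin k₁ → ZMod 8) × (Fin k₂ → ZMod 4) × (Fin k₃ → ZMod 2) →+ K //
        Injective f} : ℤ) =
      embeddingCount (Nat.card K[8]) (Nat.card K[4]) (Nat.card K[2]) k₁ k₂ k₃ := by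
  -- The `ZMod 8` factors are adjoined first and the `ZMod 2` factors last: each time `ZMod m` is
  -- adjoined, the 2-torsion of the group built so far must be divisible by `m / 2`.
  let e : (Fin k₁ → ZMod 8) × (Fin k₂ → ZMod 4) × (Fin k₃ → ZMod 2) ≃+
      (Fin k₃ → ZMod 2) × (Fin k₂ → ZMod 4) × (Fin k₁ → ZMod 8) × Unit :=
    (AddEquiv.prodAssoc.symm.trans AddEquiv.prodComm).trans <| AddEquiv.prodCongr (.refl _) <|
      AddEquiv.prodComm.trans <| AddEquiv.prodCongr (.refl _) AddEquiv.prodUnique.symm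
  have hinjUnit : Nat.card {f : Unit →+ K // Injective f} = 1 :=
    Nat.card_eq_one_iff_unique.2 ⟨⟨fun f g => Subtype.ext (Subsingleton.elim _ _)⟩,
      ⟨⟨0, fun _ _ _ => Subsingleton.elim _ _⟩⟩⟩
  rw [← card_injective_congr e,
    card_injective_pi_prod (m := 2) (p := 2) (c := 1) rfl (by decide) (by decide)
      fun x _ => ⟨x, one_nsmul x⟩,
    card_injective_pi_prod (m := 4) (p := 2) (c := 2) rfl (by decide) (by decide)
      (prod_torsionBy_le_range_nsmul (pi_torsionBy_le_range_nsmul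
        (zmod_torsionBy_le_range_nsmul two_ne_zero (by norm_num))) fun _ _ => ⟨0, rfl⟩),
    card_injective_pi_prod (m := 8) (p := 2) (c := 4) rfl (by decide) (by decide)
      fun _ _ => ⟨0, rfl⟩]
  simp only [card_torsionBy_prod, card_torsionBy_pi, card_torsionBy_zmod, Nat.card_fin,
    Nat.card_unique, hinjUnit]
  simp only [Nat.cast_ofNat, Nat.cast_one, card_torsionBy_one, one_mul, mul_one]
  refine congrArg₂ (· * ·) (congrArg₂ (· * ·) ?_ ?_) ?_ <;>
    exact prod_congr rfl fun i _ => by push_cast; ring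

lemma prod_range_eq_pow_mul {M : Type*} [CommMonoid M] {k : ℕ} {f g : ℕ → M} {a : M}
    (h : ∀ i, f i = a * g i) : ∏ i ∈ range k, f i = a ^ k * ∏ i ∈ range k, g i := by
  simp [h, prod_mul_distrib]

lemma MGN_one_one_eq {n k₁ k₂ k₃ : ℕ} (h : k₁ + k₂ + k₃ ≤ n) :
    MGN 1 n 1 k₁ k₂ k₃ =
      2 ^ (n - (k₁ + k₂ + k₃)) * embeddingCount (8 ^ n) (4 ^ n) (2 ^ n) k₁ k₂ k₃ /
        embeddingCount (8 ^ k₁ * (4 ^ k₂ * 2 ^ k₃)) (4 ^ k₁ * (4 ^ k₂ * 2 ^ k₃))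
          (2 ^ k₁ * (2 ^ k₂ * 2 ^ k₃)) k₁ k₂ k₃ := by
  have h4 : (4 : ℚ) = 2 ^ 2 := by norm_num
  have hN₂ : ∏ i ∈ range k₁, ((8 ^ n - 4 ^ n * 2 ^ i : ℚ) * 2 ^ 1) =
      2 ^ k₁ * ∏ i ∈ range k₁, ((8 : ℚ) ^ n - 4 ^ n * 2 ^ i) := by
    refine prod_range_eq_pow_mul fun i => ?_
    ring
  have hN₃ : ∏ j ∈ range k₂, ((4 ^ n - 2 ^ (n + k₁ + j) : ℚ) * 2 ^ 1) =
      2 ^ k₂ * ∏ j ∈ range k₂, ((4 : ℚ) ^ n - 2 ^ n * 2 ^ (k₁ + j)) := by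
    refine prod_range_eq_pow_mul fun i => ?_
    ring
  have hD₂ : ∏ i ∈ range k₁, ((8 ^ k₁ - 4 ^ k₁ * 2 ^ i : ℚ) * 2 ^ (1 + 2 * k₂ + k₃)) =
      2 ^ k₁ * ∏ i ∈ range k₁,
        ((8 : ℚ) ^ k₁ * (4 ^ k₂ * 2 ^ k₃) - 4 ^ k₁ * (4 ^ k₂ * 2 ^ k₃) * 2 ^ i) := by
    refine prod_range_eq_pow_mul fun i => ?_
    simp only [h4, ← pow_mul]
    ring
  have hD₃ : ∏ j ∈ range k₂, ((4 ^ k₂ - 2 ^ (k₂ + j) : ℚ) * 2 ^ (1 + 2 * k₁ + k₃)) =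
      2 ^ k₂ * ∏ j ∈ range k₂,
        ((4 : ℚ) ^ k₁ * (4 ^ k₂ * 2 ^ k₃) - 2 ^ k₁ * (2 ^ k₂ * 2 ^ k₃) * 2 ^ (k₁ + j)) := by
    refine prod_range_eq_pow_mul fun i => ?_
    simp only [h4, ← pow_mul]
    ring
  have hn : (2 : ℚ) ^ n = 2 ^ (k₁ + k₂ + k₃) * 2 ^ (n - (k₁ + k₂ + k₃)) := by
    rw [← pow_add, Nat.add_sub_cancel' h]
  unfold MGN embeddingCount
  rw [hN₂, hN₃, hD₂, hD₃, prod_range_one, prod_range_one]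
  push_cast
  rw [show (2 : ℚ) ^ k₁ * (2 ^ k₂ * 2 ^ k₃) = 2 ^ (k₁ + k₂ + k₃) by ring]
  generalize ∏ i ∈ range k₁, ((8 : ℚ) ^ n - 4 ^ n * 2 ^ i) = A
  generalize ∏ j ∈ range k₂, ((4 : ℚ) ^ n - 2 ^ n * 2 ^ (k₁ + j)) = B
  generalize ∏ l ∈ range k₃, ((2 : ℚ) ^ n - 2 ^ (k₁ + k₂ + l)) = C
  generalize ∏ i ∈ range k₁,
    ((8 : ℚ) ^ k₁ * (4 ^ k₂ * 2 ^ k₃) - 4 ^ k₁ * (4 ^ k₂ * 2 ^ k₃) * 2 ^ i) = A'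
  generalize ∏ j ∈ range k₂,
    ((4 : ℚ) ^ k₁ * (4 ^ k₂ * 2 ^ k₃) - 2 ^ (k₁ + k₂ + k₃) * 2 ^ (k₁ + j)) = B'
  generalize ∏ l ∈ range k₃, ((2 : ℚ) ^ (k₁ + k₂ + k₃) - 2 ^ (k₁ + k₂ + l)) = C'
  rw [hn]
  calc _ = 2 ^ (k₁ + k₂ + k₃ + k₁ + k₂) * (2 ^ (n - (k₁ + k₂ + k₃)) * (A * B * C)) /
        (2 ^ (k₁ + k₂ + k₃ + k₁ + k₂) * (A' * B' * C')) := by congr 1 <;> ring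
    _ = _ := by rw [mul_div_mul_left _ _ (by positivity), mul_div_assoc]

/-- The number of additive subgroups of `(ZMod 8)^n` isomorphic to
`(ZMod 8)^(k₁) × (ZMod 4)^(k₂) × (ZMod 2)^(k₃)`, multiplied by `2^r` where
`r = n - (k₁+k₂+k₃)`, equals `N(1,n;1,k₁,k₂,k₃)`. -/
theorem count_Z8_codes (n k₁ k₂ k₃ : ℕ) (h : k₁ + k₂ + k₃ ≤ n)
    (r : ℕ) (hr : r = n - (k₁ + k₂ + k₃)) :
    (Nat.card {C : AddSubgroup (Fin n → ZMod 8) //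
        Nonempty (C ≃+
          ((Fin k₁ → ZMod 8) × (Fin k₂ → ZMod 4) × (Fin k₃ → ZMod 2)))} : ℚ) * 2 ^ r
      = MGN 1 n 1 k₁ k₂ k₃ := by
  set H := (Fin k₁ → ZMod 8) × (Fin k₂ → ZMod 4) × (Fin k₃ → ZMod 2)
  have key := card_addSubgroup_addEquiv_mul_card_addAut (Fin n → ZMod 8) H
  have hG := card_injective_eq_embeddingCount (Fin n → ZMod 8) k₁ k₂ k₃
  have hH := card_injective_eq_embeddingCount H k₁ k₂ k₃
  have haut : Nat.card (H ≃+ H) ≠ 0 := Nat.card_ne_zero.2 ⟨⟨.refl H⟩, inferInstance⟩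
  rw [card_addAut_eq_card_injective] at key haut
  simp only [H, card_torsionBy_prod, card_torsionBy_pi, card_torsionBy_zmod, Nat.card_fin,
    Int.reduceAbs, Nat.reduceGcd, Nat.cast_mul, Nat.cast_pow, Nat.cast_ofNat] at hG hH
  rw [MGN_one_one_eq h, ← hr, ← hG, ← hH, eq_div_iff (by exact_mod_cast haut), ← key]
  push_cast
  ring
end

section
/- Let α, β, k₀, k₁, k₂, k₃ be nonnegative integers with k₀ ≤ α and l := k₁ + k₂ + k₃ ≤ β. Then N(α,β;k₀,k₁,k₂,k₃) = 2^δ · [α choose k₀]₂ · [β; k₁,k₂,k₃]₂, where δ = k₀(β−l) + k₁(α−k₀+2(β−l)+k₃) + k₂((β−l)+(α−k₀)). -/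
/-! Each factor `q^m - q^(c+i)` equals `q^(c+i) (q^(m-c-i) - 1)`, so each of the eight products
defining `N` is a power of `2` times a falling product `(2^n - 1)(2^(n-1) - 1)⋯(2^(n-k+1) - 1)`.
The Gaussian coefficients are quotients of such falling products, and the powers of `2` collect
into `2^δ`. -/

open Finset

/-- The Gaussian (2-)binomial coefficient `[n choose k]₂`. -/
def gauss2 (n k : ℕ) : ℚ :=
  ∏ i ∈ range k, ((2 ^ (n - i) - 1) / (2 ^ (i + 1) - 1) : ℚ)

section FallingProd

variable {R : Type*} [CommRing R]

def qFallingProd (q : R) (n k : ℕ) : R :=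
  ∏ i ∈ range k, (q ^ (n - i) - 1)

theorem prod_pow_sub_pow_add (q : R) {m c n k : ℕ} (hm : c + n = m) (hk : k ≤ n) :
    ∏ i ∈ range k, (q ^ m - q ^ (c + i)) =
      q ^ (k * c + ∑ i ∈ range k, i) * qFallingProd q n k := by
  have factor : ∀ i ∈ range k, q ^ m - q ^ (c + i) = q ^ (c + i) * (q ^ (n - i) - 1) := by
    intro i hi
    have : c + i + (n - i) = m := by have := mem_range.mp hi; omega
    rw [mul_sub, mul_one, ← pow_add, this]
  rw [prod_congr rfl factor, prod_mul_distrib, prod_pow_eq_pow_sum, sum_add_distrib,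
    sum_const, card_range, smul_eq_mul, qFallingProd]

theorem prod_eight_pow_sub (b k : ℕ) (h : k ≤ b) :
    ∏ i ∈ range k, ((8 : R) ^ b - 4 ^ b * 2 ^ i) =
      2 ^ (k * (2 * b) + ∑ i ∈ range k, i) * qFallingProd (2 : R) b k := by
  have h8 : ∀ i, (8 : R) ^ b - 4 ^ b * 2 ^ i = 2 ^ (3 * b) - 2 ^ (2 * b + i) := fun i => by
    rw [show (8 : R) = 2 ^ 3 by norm_num, show (4 : R) = 2 ^ 2 by norm_num,
      ← pow_mul, ← pow_mul, ← pow_add]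
  simp only [h8]
  exact prod_pow_sub_pow_add _ (by omega) h

theorem prod_four_pow_sub {b c n k : ℕ} (hb : c + n = b) (hk : k ≤ n) :
    ∏ i ∈ range k, ((4 : R) ^ b - 2 ^ (b + c + i)) =
      2 ^ (k * (b + c) + ∑ i ∈ range k, i) * qFallingProd (2 : R) n k := by
  rw [show (4 : R) = 2 ^ 2 by norm_num, ← pow_mul]
  exact prod_pow_sub_pow_add _ (by omega) hk

end FallingProd

theorem qFallingProd_ne_zero {K : Type*} [Field K] [LinearOrder K] [IsStrictOrderedRing K]
    {q : K} (hq : 1 < q) {n k : ℕ} (h : k ≤ n) : qFallingProd q n k ≠ 0 :=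
  prod_ne_zero_iff.mpr fun i hi =>
    sub_ne_zero.mpr (one_lt_pow₀ hq (by have := mem_range.mp hi; omega)).ne'

theorem gauss2_eq_div (n k : ℕ) :
    gauss2 n k = qFallingProd (2 : ℚ) n k / qFallingProd (2 : ℚ) k k := by
  rw [gauss2, prod_div_distrib, qFallingProd, qFallingProd,
    ← prod_range_reflect (fun j => (2 : ℚ) ^ (j + 1) - 1) k]
  refine congrArg _ (prod_congr rfl fun i hi => ?_)
  have := mem_range.mp hi
  congr 2
  omega

/-- The Mixed Generalized Gaussian Number expressed via 2-binomial and 2-multinomial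
coefficients. -/
theorem MGN_eq_gauss2 (α β k₀ k₁ k₂ k₃ : ℕ) (h₀ : k₀ ≤ α) (h : k₁ + k₂ + k₃ ≤ β) :
    MGN α β k₀ k₁ k₂ k₃ =
      2 ^ (k₀ * (β - (k₁ + k₂ + k₃)) +
           k₁ * (α - k₀ + 2 * (β - (k₁ + k₂ + k₃)) + k₃) +
           k₂ * ((β - (k₁ + k₂ + k₃)) + (α - k₀))) *
        gauss2 α k₀ * (gauss2 β k₁ * gauss2 (β - k₁) k₂ * gauss2 (β - k₁ - k₂) k₃) := by
  have n₁ := prod_pow_sub_pow_add (2 : ℚ) (c := 0) (zero_add α) h₀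
  have n₂ := prod_eight_pow_sub (R := ℚ) β k₁ (by omega)
  have n₃ := prod_four_pow_sub (R := ℚ) (b := β) (c := k₁) (n := β - k₁) (k := k₂)
    (by omega) (by omega)
  have n₄ := prod_pow_sub_pow_add (2 : ℚ) (m := β) (c := k₁ + k₂) (n := β - k₁ - k₂) (k := k₃)
    (by omega) (by omega)
  have d₁ := prod_pow_sub_pow_add (2 : ℚ) (m := k₀ + k₁ + k₂ + k₃) (c := k₁ + k₂ + k₃) (k := k₀)
    (by omega) le_rfl
  have d₂ := prod_eight_pow_sub (R := ℚ) k₁ k₁ le_rfl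
  have d₃ := prod_four_pow_sub (R := ℚ) (c := 0) (zero_add k₂) le_rfl
  have d₄ := prod_pow_sub_pow_add (2 : ℚ) (m := k₁ + k₂ + k₃) (c := k₁ + k₂) (k := k₃)
    (by omega) le_rfl
  simp only [zero_add, add_zero, mul_zero] at n₁ d₃
  rw [MGN]
  simp only [← prod_mul_pow_card, card_range]
  rw [n₁, n₂, n₃, n₄, d₁, d₂, d₃, d₄]
  simp only [gauss2_eq_div]
  obtain ⟨A, rfl⟩ := Nat.exists_eq_add_of_le h₀
  obtain ⟨B, rfl⟩ := Nat.exists_eq_add_of_le h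
  have hq : (1 : ℚ) < 2 := one_lt_two
  have hk₀ := qFallingProd_ne_zero hq (le_refl k₀)
  have hk₁ := qFallingProd_ne_zero hq (le_refl k₁)
  have hk₂ := qFallingProd_ne_zero hq (le_refl k₂)
  have hk₃ := qFallingProd_ne_zero hq (le_refl k₃)
  simp only [Nat.add_sub_cancel_left]
  field_simp
  ring
end

section
/- Let α, β, k₀, k₁, k₂, k₃ be nonnegative integers with k₀ ≤ α and l := k₁ + k₂ + k₃ ≤ β. If α·k₂ = k₀·(k₂ + k₃), then N(α,β;k₀,k₁,k₂,k₃) = N(α,β;α−k₀, β−l, k₃, k₂); that is, the number of ℤ₂ℤ₈-additive codes of type (α,β;k₀,k₁,k₂,k₃) equals the number of codes whose type equals the dual type (α,β;α−k₀,β−l,k₃,k₂). -/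
open Finset

/-!
Writing `a = k₀ + s` and `b = k₁ + k₂ + k₃ + t`, and `F n k = ∏_{i<k} (2ⁿ - 2ⁱ)`, one finds
`N(a,b;k₀,k₁,k₂,k₃) = 2^e · F a a · F b b / (F k₀ k₀ · F s s · F k₁ k₁ · F k₂ k₂ · F k₃ k₃ · F t t)`
with `e = (k₀ + k₁)(s + t) + s k₂ - (2 k₀ s + k₁ k₂ + k₂ k₃ + k₃ t)`. Passing to the dual type
swaps `k₀ ↔ s`, `k₁ ↔ t`, `k₂ ↔ k₃`, which leaves everything invariant except the term `s k₂` of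
the exponent, which becomes `k₀ k₃`; the hypothesis `α k₂ = k₀ (k₂ + k₃)` says `s k₂ = k₀ k₃`.
-/

section FrameProd

variable {R : Type*}

/-- For a prime power `q`, this counts the linearly independent `k`-tuples in `𝔽_qⁿ`. -/
def frameProd [CommRing R] (q : R) (n k : ℕ) : R := ∏ i ∈ range k, (q ^ n - q ^ i)

theorem frameProd_add [CommRing R] (q : R) (m n k : ℕ) :
    frameProd q (m + n) (m + k) = frameProd q (m + n) m * (q ^ (m * k) * frameProd q n k) := by
  have hconst : (q ^ m) ^ k = ∏ _i ∈ range k, q ^ m := by simp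
  rw [frameProd, prod_range_add, frameProd, frameProd, pow_mul, hconst, ← prod_mul_distrib]
  congr 1
  exact prod_congr rfl fun i _ => by ring

theorem frameProd_pos [CommRing R] [PartialOrder R] [IsStrictOrderedRing R] {q : R} (hq : 1 < q)
    {n k : ℕ} (hk : k ≤ n) : 0 < frameProd q n k :=
  prod_pos fun _ hi =>
    sub_pos.mpr (pow_lt_pow_right₀ hq (lt_of_lt_of_le (mem_range.mp hi) hk))

end FrameProd

local notation "F" => frameProd (2 : ℚ)

theorem frameProd_two_self_pos (n : ℕ) : 0 < F n n := frameProd_pos one_lt_two le_rfl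

theorem MGN_eq (a b k₀ k₁ k₂ k₃ : ℕ) :
    MGN a b k₀ k₁ k₂ k₃ =
      2 ^ (b * k₀ + (2 * b + a) * k₁ + (b + a) * k₂) * (F a k₀ * F b (k₁ + k₂ + k₃)) /
      (2 ^ ((k₁ + k₂ + k₃) * k₀ + (2 * k₁ + k₀ + 2 * k₂ + k₃) * k₁ +
            (k₂ + k₀ + 2 * k₁ + k₃) * k₂ + (k₁ + k₂) * k₃) *
        (F k₀ k₀ * F k₁ k₁ * F k₂ k₂ * F k₃ k₃)) := by
  have h8 (n : ℕ) : (8 : ℚ) ^ n = 2 ^ (3 * n) := by rw [pow_mul]; norm_num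
  have h4 (n : ℕ) : (4 : ℚ) ^ n = 2 ^ (2 * n) := by rw [pow_mul]; norm_num
  have n₁ (i : ℕ) : ((8 : ℚ) ^ b - 4 ^ b * 2 ^ i) * 2 ^ a = (2 ^ b - 2 ^ i) * 2 ^ (2 * b + a) := by
    rw [h8, h4]; ring
  have n₂ (i : ℕ) : ((4 : ℚ) ^ b - 2 ^ (b + k₁ + i)) * 2 ^ a =
      (2 ^ b - 2 ^ (k₁ + i)) * 2 ^ (b + a) := by
    rw [h4]; ring
  have d₀ (i : ℕ) : (2 : ℚ) ^ (k₀ + k₁ + k₂ + k₃) - 2 ^ (k₁ + k₂ + k₃ + i) =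
      (2 ^ k₀ - 2 ^ i) * 2 ^ (k₁ + k₂ + k₃) := by ring
  have d₁ (i : ℕ) : ((8 : ℚ) ^ k₁ - 4 ^ k₁ * 2 ^ i) * 2 ^ (k₀ + 2 * k₂ + k₃) =
      (2 ^ k₁ - 2 ^ i) * 2 ^ (2 * k₁ + k₀ + 2 * k₂ + k₃) := by
    rw [h8, h4]; ring
  have d₂ (i : ℕ) : ((4 : ℚ) ^ k₂ - 2 ^ (k₂ + i)) * 2 ^ (k₀ + 2 * k₁ + k₃) =
      (2 ^ k₂ - 2 ^ i) * 2 ^ (k₂ + k₀ + 2 * k₁ + k₃) := by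
    rw [h4]; ring
  have d₃ (i : ℕ) : (2 : ℚ) ^ (k₁ + k₂ + k₃) - 2 ^ (k₁ + k₂ + i) =
      (2 ^ k₃ - 2 ^ i) * 2 ^ (k₁ + k₂) := by ring
  simp only [MGN, frameProd, prod_range_add, n₁, n₂, d₀, d₁, d₂, d₃, prod_mul_distrib, prod_const,
    card_range]
  ring

theorem MGN_mul_eq {a b k₀ k₁ k₂ k₃ s t : ℕ} (ha : k₀ + s = a) (hb : k₁ + k₂ + k₃ + t = b) :
    MGN a b k₀ k₁ k₂ k₃ *
        (2 ^ (2 * k₀ * s + k₁ * k₂ + k₂ * k₃ + k₃ * t) *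
          (F k₀ k₀ * F s s * F k₁ k₁ * F k₂ k₂ * F k₃ k₃ * F t t)) =
      2 ^ ((k₀ + k₁) * (s + t) + s * k₂) * (F a a * F b b) := by
  subst ha hb
  rw [MGN_eq, div_mul_eq_mul_div,
    div_eq_iff (ne_of_gt (by apply_rules [mul_pos, pow_pos, two_pos, frameProd_two_self_pos])),
    frameProd_add, frameProd_add]
  ring

/-- If `α·k₂ = k₀·(k₂+k₃)`, the number of ℤ₂ℤ₈-additive codes of type
`(α,β;k₀,k₁,k₂,k₃)` equals the number of codes of the dual type
`(α,β;α-k₀,β-(k₁+k₂+k₃),k₃,k₂)`. -/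
theorem MGN_dual_type_eq (α β k₀ k₁ k₂ k₃ : ℕ) (h₀ : k₀ ≤ α) (h : k₁ + k₂ + k₃ ≤ β)
    (hc : α * k₂ = k₀ * (k₂ + k₃)) :
    MGN α β k₀ k₁ k₂ k₃ = MGN α β (α - k₀) (β - (k₁ + k₂ + k₃)) k₃ k₂ := by
  obtain ⟨s, rfl⟩ := Nat.exists_eq_add_of_le h₀
  obtain ⟨t, rfl⟩ := Nat.exists_eq_add_of_le h
  have hs : s * k₂ = k₀ * k₃ := by linarith
  rw [Nat.add_sub_cancel_left, Nat.add_sub_cancel_left]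
  refine mul_right_cancel₀
    (ne_of_gt (by apply_rules [mul_pos, pow_pos, two_pos, frameProd_two_self_pos]))
    ((MGN_mul_eq rfl rfl).trans ?_)
  rw [show 2 * k₀ * s + k₁ * k₂ + k₂ * k₃ + k₃ * t = 2 * s * k₀ + t * k₃ + k₃ * k₂ + k₂ * k₁ by ring,
    show F k₀ k₀ * F s s * F k₁ k₁ * F k₂ k₂ * F k₃ k₃ * F t t =
      F s s * F k₀ k₀ * F t t * F k₃ k₃ * F k₂ k₂ * F k₁ k₁ by ring,
    MGN_mul_eq (by ring) (by ring)]
  congr 2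
  linear_combination hs
end

section
/- Let r, s, k₀, k₁ be nonnegative integers with k₀ ≤ r and k₁ ≤ s. Then N(r,s;k₀,k₁,0,0) = N(r,s;r−k₀, s−k₁, 0, 0); that is, the number of ℤ₂ℤ₈-additive codes of type (r,s;k₀,k₁,0,0) equals the number of codes whose type equals the dual type (r,s;r−k₀,s−k₁,0,0). -/
open Finset

/-!
With `k₂ = k₃ = 0` and `r = k₀ + a`, `s = k₁ + b`, pulling the powers of two out of the
products gives `N(r,s;k₀,k₁,0,0) = 2^(k₀ b + k₁ a + 2 k₁ b) [r, k₀]₂ [s, k₁]₂` with Gaussian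
binomials `[n, k]₂`. The exponent is invariant under `(k₀, k₁, a, b) ↦ (a, b, k₀, k₁)`, and so
are the Gaussian binomials, since `[k + n, k]₂ = [k + n, n]₂`.
-/

/-- The number of ordered linearly independent `k`-tuples in `𝔽₂ⁿ`. -/
def linIndepTuples (n k : ℕ) : ℚ := ∏ i ∈ range k, ((2 : ℚ) ^ n - 2 ^ i)

def gaussBinomTwo (n k : ℕ) : ℚ := linIndepTuples n k / linIndepTuples k k

lemma linIndepTuples_pos {n k : ℕ} (h : k ≤ n) : 0 < linIndepTuples n k :=
  prod_pos fun _ hi => sub_pos.2 <| pow_lt_pow_right₀ one_lt_two <| (mem_range.1 hi).trans_le h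

/-- An ordered basis of `𝔽₂^(k+n)` is `k` independent vectors followed by `n` vectors independent
modulo their span. -/
lemma linIndepTuples_add_self (k n : ℕ) :
    linIndepTuples (k + n) (k + n) = 2 ^ (k * n) * linIndepTuples (k + n) k * linIndepTuples n n := by
  have tail : ∏ i ∈ range n, ((2 : ℚ) ^ (k + n) - 2 ^ (k + i))
      = ∏ i ∈ range n, (((2 : ℚ) ^ n - 2 ^ i) * 2 ^ k) :=
    prod_congr rfl fun i _ => by ring
  unfold linIndepTuples
  rw [prod_range_add, tail, prod_mul_distrib, prod_const, card_range, ← pow_mul]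
  ring

lemma gaussBinomTwo_add_symm (k n : ℕ) : gaussBinomTwo (k + n) k = gaussBinomTwo (k + n) n := by
  have hk := (linIndepTuples_pos (le_refl k)).ne'
  have hn := (linIndepTuples_pos (le_refl n)).ne'
  have swapped := linIndepTuples_add_self n k
  rw [add_comm n k, mul_comm n k] at swapped
  rw [gaussBinomTwo, gaussBinomTwo, div_eq_div_iff hk hn]
  refine mul_left_cancel₀ (pow_ne_zero (k * n) two_ne_zero) ?_
  linear_combination (linIndepTuples_add_self k n).symm.trans swapped

lemma MGN_add_add_zero_zero (k₀ k₁ a b : ℕ) :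
    MGN (k₀ + a) (k₁ + b) k₀ k₁ 0 0
      = 2 ^ (k₀ * b + k₁ * a + 2 * k₁ * b) * gaussBinomTwo (k₀ + a) k₀ * gaussBinomTwo (k₁ + b) k₁ := by
  have prod_range_sub_mul (n m : ℕ) (c : ℚ) :
      ∏ i ∈ range m, (((2 : ℚ) ^ n - 2 ^ i) * c) = linIndepTuples n m * c ^ m := by
    rw [prod_mul_distrib, prod_const, card_range, linIndepTuples]
  have factor_eight (n i : ℕ) : (8 : ℚ) ^ n - 4 ^ n * 2 ^ i = (2 ^ n - 2 ^ i) * 2 ^ (2 * n) := by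
    rw [show (8 : ℚ) = 2 ^ 3 by norm_num, show (4 : ℚ) = 2 ^ 2 by norm_num, ← pow_mul, ← pow_mul]
    ring
  have hk₀ := (linIndepTuples_pos (le_refl k₀)).ne'
  have hk₁ := (linIndepTuples_pos (le_refl k₁)).ne'
  simp only [MGN, range_zero, prod_empty, mul_one, add_zero, mul_zero, factor_eight, mul_assoc,
    prod_range_sub_mul]
  rw [prod_congr rfl fun i _ => show (2 : ℚ) ^ (k₀ + k₁) - 2 ^ (k₁ + i) = (2 ^ k₀ - 2 ^ i) * 2 ^ k₁
    by ring, prod_range_sub_mul, gaussBinomTwo, gaussBinomTwo]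
  field_simp
  ring

/-- The number of ℤ₂ℤ₈-additive codes of type `(r,s;k₀,k₁,0,0)` equals the number of
codes of the dual type `(r,s;r-k₀,s-k₁,0,0)`. -/
theorem MGN_dual_type_eq_of_k₂_k₃_zero (r s k₀ k₁ : ℕ) (h₀ : k₀ ≤ r) (h₁ : k₁ ≤ s) :
    MGN r s k₀ k₁ 0 0 = MGN r s (r - k₀) (s - k₁) 0 0 := by
  obtain ⟨a, rfl⟩ := Nat.exists_eq_add_of_le h₀
  obtain ⟨b, rfl⟩ := Nat.exists_eq_add_of_le h₁
  rw [Nat.add_sub_cancel_left, Nat.add_sub_cancel_left, MGN_add_add_zero_zero,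
    add_comm k₀, add_comm k₁, MGN_add_add_zero_zero, gaussBinomTwo_add_symm a,
    gaussBinomTwo_add_symm b]
  ring
end

section
/- Let r, s, k₀, k₂ be nonnegative integers with k₀ ≤ r and k₂ ≤ s, and suppose r·k₂ = s·k₀. Then N(r,s;k₀,0,k₂,s−k₂) = N(r,s;r−k₀, 0, s−k₂, k₂); that is, the number of ℤ₂ℤ₈-additive codes of type (r,s;k₀,0,k₂,s−k₂) equals the number of codes whose type equals the dual type (r,s;r−k₀,0,s−k₂,k₂). -/
open Finset

/-- auxiliary: product of (2^(i+1) - 1). -/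
def phiQ (n : ℕ) : ℚ := ∏ i ∈ range n, ((2:ℚ) ^ (i+1) - 1)

lemma phiQ_pos (n : ℕ) : 0 < phiQ n := by
  apply Finset.prod_pos
  intro i _
  have h : (2:ℚ) ≤ 2 ^ (i+1) := by
    calc (2:ℚ) = 2 ^ 1 := (pow_one 2).symm
    _ ≤ 2 ^ (i+1) := by
      apply pow_le_pow_right₀ (by norm_num)
      omega
  linarith

lemma phiQ_ne_zero (n : ℕ) : phiQ n ≠ 0 := ne_of_gt (phiQ_pos n)

lemma two_pow_succ_sub_one_ne (m : ℕ) : ((2:ℚ) ^ (m+1) - 1) ≠ 0 := by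
  have h : (2:ℚ) ≤ 2 ^ (m+1) := by
    calc (2:ℚ) = 2 ^ 1 := (pow_one 2).symm
    _ ≤ 2 ^ (m+1) := by
      apply pow_le_pow_right₀ (by norm_num)
      omega
  intro h0
  have : (2:ℚ)^(m+1) = 1 := by linarith
  linarith

lemma phiQ_succ (m : ℕ) : phiQ (m+1) = phiQ m * ((2:ℚ) ^ (m+1) - 1) :=
  Finset.prod_range_succ _ _

/-- auxiliary: product of (2^n - 2^i), i < k. -/
def gQ (n k : ℕ) : ℚ := ∏ i ∈ range k, ((2:ℚ) ^ n - 2 ^ i)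

lemma gQ_div (k : ℕ) : ∀ m, gQ (k + m) k = 2 ^ (∑ i ∈ range k, i) * phiQ (k + m) / phiQ m := by
  induction k with
  | zero =>
    intro m
    simp [gQ, div_self (phiQ_ne_zero m)]
  | succ k ih =>
    intro m
    have e1 : (k+1) + m = k + (m+1) := by omega
    rw [e1, gQ, prod_range_succ, ← gQ, ih (m+1)]
    have h2 : (2:ℚ) ^ (k + (m+1)) - 2 ^ k = 2 ^ k * ((2:ℚ) ^ (m+1) - 1) := by
      rw [pow_add]; ring
    rw [h2, phiQ_succ, Finset.sum_range_succ]
    have hm := phiQ_ne_zero m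
    have h1 := two_pow_succ_sub_one_ne m
    have hne : phiQ m * ((2:ℚ) ^ (m+1) - 1) ≠ 0 := mul_ne_zero hm h1
    rw [div_mul_eq_mul_div, div_eq_div_iff hne hm]
    ring

lemma gQ_self (k : ℕ) : gQ k k = 2 ^ (∑ i ∈ range k, i) * phiQ k := by
  have h := gQ_div k 0
  simpa [phiQ] using h

lemma mgn_closed (d e k₀ k₂ : ℕ) :
    MGN (k₀ + d) (k₂ + e) k₀ 0 k₂ e =
      2 ^ (k₂ * d) * (phiQ (k₀ + d) * phiQ (k₂ + e)) /
        (phiQ k₀ * phiQ d * phiQ k₂ * phiQ e) := by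
  unfold MGN
  simp only [range_zero, prod_empty, one_mul, mul_one, add_zero, zero_add, mul_zero, Nat.mul_zero]
  have hN1 : ∏ i ∈ range k₀, (((2:ℚ) ^ (k₀+d) - 2 ^ i) * 2 ^ (k₂+e))
      = gQ (k₀+d) k₀ * ((2:ℚ) ^ (k₂+e)) ^ k₀ := by
    rw [prod_mul_distrib, prod_const, card_range, gQ]
  have hN3 : ∏ i ∈ range k₂, (((4:ℚ) ^ (k₂+e) - 2 ^ ((k₂+e) + i)) * 2 ^ (k₀+d))
      = gQ (k₂+e) k₂ * (((2:ℚ) ^ (k₂+e)) ^ k₂ * ((2:ℚ) ^ (k₀+d)) ^ k₂) := by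
    have hpt : ∀ i ∈ range k₂, ((4:ℚ) ^ (k₂+e) - 2 ^ ((k₂+e) + i)) * 2 ^ (k₀+d)
        = (((2:ℚ) ^ (k₂+e) - 2 ^ i) * (2:ℚ) ^ (k₂+e)) * (2:ℚ) ^ (k₀+d) := by
      intro i _
      have h4 : (4:ℚ) ^ (k₂+e) = 2 ^ (k₂+e) * 2 ^ (k₂+e) := by
        rw [show (4:ℚ) = 2 * 2 by norm_num, mul_pow]
      rw [h4, pow_add ((2:ℚ)) (k₂+e) i]
      ring
    rw [prod_congr rfl hpt, prod_mul_distrib, prod_mul_distrib, prod_const, prod_const,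
      card_range, gQ, mul_assoc]
  have hN4 : ∏ i ∈ range e, ((2:ℚ) ^ (k₂+e) - 2 ^ (k₂+i))
      = gQ e e * ((2:ℚ) ^ k₂) ^ e := by
    have hpt : ∀ i ∈ range e, (2:ℚ) ^ (k₂+e) - 2 ^ (k₂+i)
        = ((2:ℚ) ^ e - 2 ^ i) * (2:ℚ) ^ k₂ := by
      intro i _
      rw [pow_add, pow_add]; ring
    rw [prod_congr rfl hpt, prod_mul_distrib, prod_const, card_range, gQ]
  have hD1 : ∏ i ∈ range k₀, ((2:ℚ) ^ (k₀+k₂+e) - 2 ^ (k₂+e+i))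
      = gQ k₀ k₀ * ((2:ℚ) ^ (k₂+e)) ^ k₀ := by
    have hpt : ∀ i ∈ range k₀, (2:ℚ) ^ (k₀+k₂+e) - 2 ^ (k₂+e+i)
        = ((2:ℚ) ^ k₀ - 2 ^ i) * (2:ℚ) ^ (k₂+e) := by
      intro i _
      simp only [pow_add]; ring
    rw [prod_congr rfl hpt, prod_mul_distrib, prod_const, card_range, gQ]
  have hD3 : ∏ i ∈ range k₂, (((4:ℚ) ^ k₂ - 2 ^ (k₂+i)) * 2 ^ (k₀+e))
      = gQ k₂ k₂ * (((2:ℚ) ^ k₂) ^ k₂ * ((2:ℚ) ^ (k₀+e)) ^ k₂) := by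
    have hpt : ∀ i ∈ range k₂, ((4:ℚ) ^ k₂ - 2 ^ (k₂+i)) * 2 ^ (k₀+e)
        = (((2:ℚ) ^ k₂ - 2 ^ i) * (2:ℚ) ^ k₂) * (2:ℚ) ^ (k₀+e) := by
      intro i _
      have h4 : (4:ℚ) ^ k₂ = 2 ^ k₂ * 2 ^ k₂ := by
        rw [show (4:ℚ) = 2 * 2 by norm_num, mul_pow]
      rw [h4, pow_add]
      ring
    rw [prod_congr rfl hpt, prod_mul_distrib, prod_mul_distrib, prod_const, prod_const,
      card_range, gQ, mul_assoc]
  rw [hN1, hN3, hN4, hD1, hD3, gQ_div k₀ d, gQ_div k₂ e, gQ_self k₀, gQ_self k₂, gQ_self e]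
  have hk0 := phiQ_ne_zero k₀
  have hk2 := phiQ_ne_zero k₂
  have hd := phiQ_ne_zero d
  have he := phiQ_ne_zero e
  have hkd := phiQ_ne_zero (k₀ + d)
  have hke := phiQ_ne_zero (k₂ + e)
  field_simp
  ring

/-- If `r·k₂ = s·k₀`, the number of ℤ₂ℤ₈-additive codes of type `(r,s;k₀,0,k₂,s-k₂)`
equals the number of codes of the dual type `(r,s;r-k₀,0,s-k₂,k₂)`. -/
theorem MGN_dual_type_eq_special (r s k₀ k₂ : ℕ) (h₀ : k₀ ≤ r) (h₂ : k₂ ≤ s)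
    (hc : r * k₂ = s * k₀) :
    MGN r s k₀ 0 k₂ (s - k₂) = MGN r s (r - k₀) 0 (s - k₂) k₂ := by
  obtain ⟨d, rfl⟩ : ∃ d, r = k₀ + d := ⟨r - k₀, by omega⟩
  obtain ⟨e, rfl⟩ : ∃ e, s = k₂ + e := ⟨s - k₂, by omega⟩
  simp only [Nat.add_sub_cancel_left] at *
  have h2 := mgn_closed k₀ k₂ d e
  rw [add_comm d k₀, add_comm e k₂] at h2
  rw [mgn_closed d e k₀ k₂, h2]
  have h3 : d * k₂ = e * k₀ := by
    rw [add_mul, add_mul, mul_comm k₂ k₀] at hc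
    omega
  rw [mul_comm k₂ d, h3]
  ring
end

section
/- Let r, s, k, l, m be nonnegative integers with m ≤ r and s = k + l. Then N(r,s;m,k,l,0) = N(r,s;m,l,k,0). -/
open Finset

/-!
Pulling the powers of two out of every factor, `N(r, k+l; m, k, l, 0)` becomes
`2 ^ ((r - m)(k + l) - k l)` times `|Inj(𝔽₂ᵐ, 𝔽₂ʳ)| · |GL_{k+l}(𝔽₂)| / (|GL_m(𝔽₂)| · |GL_k(𝔽₂)| · |GL_l(𝔽₂)|)`:
the `k₁`- and `k₂`-factors of the numerator together make up the full product for
`|GL_{k+l}(𝔽₂)|`. This expression is visibly symmetric in `k` and `l`.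
-/

/-- The number of linearly independent `n`-tuples in `𝔽₂ ^ a`. -/
def linIndepCount (a n : ℕ) : ℚ := ∏ i ∈ range n, ((2 : ℚ) ^ a - 2 ^ i)

lemma linIndepCount_ne_zero {a n : ℕ} (h : n ≤ a) : linIndepCount a n ≠ 0 :=
  prod_ne_zero_iff.mpr fun _ hi =>
    sub_ne_zero_of_ne (pow_lt_pow_right₀ one_lt_two ((mem_range.mp hi).trans_le h)).ne'

lemma four_pow_eq (b : ℕ) : (4 : ℚ) ^ b = 2 ^ (2 * b) := by
  rw [pow_mul]; norm_num

lemma eight_pow_eq (b : ℕ) : (8 : ℚ) ^ b = 2 ^ (3 * b) := by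
  rw [pow_mul]; norm_num

lemma prod_range_mul_two_pow {n c : ℕ} {f g : ℕ → ℚ} (h : ∀ i, f i = g i * 2 ^ c) :
    ∏ i ∈ range n, f i = (∏ i ∈ range n, g i) * 2 ^ (c * n) := by
  simp only [h, prod_mul_distrib, prod_const, card_range, pow_mul]

lemma MGN_mul_two_pow (r k l m : ℕ) :
    MGN r (k + l) m k l 0 * 2 ^ (m * (k + l) + k * l) =
      2 ^ (r * (k + l)) * linIndepCount r m * linIndepCount (k + l) (k + l) /
        (linIndepCount m m * linIndepCount k k * linIndepCount l l) := by
  have hN₁ : ∏ i ∈ range m, ((2 ^ r - 2 ^ i : ℚ) * 2 ^ (k + l)) =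
      linIndepCount r m * 2 ^ ((k + l) * m) := prod_range_mul_two_pow fun _ => rfl
  have hN₂ : ∏ i ∈ range k, ((8 ^ (k + l) - 4 ^ (k + l) * 2 ^ i : ℚ) * 2 ^ r) =
      linIndepCount (k + l) k * 2 ^ ((2 * (k + l) + r) * k) :=
    prod_range_mul_two_pow fun _ => by rw [eight_pow_eq, four_pow_eq]; ring
  have hN₃ : ∏ i ∈ range l, ((4 ^ (k + l) - 2 ^ (k + l + k + i) : ℚ) * 2 ^ r) =
      (∏ i ∈ range l, ((2 : ℚ) ^ (k + l) - 2 ^ (k + i))) * 2 ^ ((k + l + r) * l) :=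
    prod_range_mul_two_pow fun _ => by rw [four_pow_eq]; ring
  have hD₁ : ∏ i ∈ range m, ((2 : ℚ) ^ (m + k + l) - 2 ^ (k + l + i)) =
      linIndepCount m m * 2 ^ ((k + l) * m) := prod_range_mul_two_pow fun _ => by ring
  have hD₂ : ∏ i ∈ range k, ((8 ^ k - 4 ^ k * 2 ^ i : ℚ) * 2 ^ (m + 2 * l)) =
      linIndepCount k k * 2 ^ ((2 * k + (m + 2 * l)) * k) :=
    prod_range_mul_two_pow fun _ => by rw [eight_pow_eq, four_pow_eq]; ring
  have hD₃ : ∏ i ∈ range l, ((4 ^ l - 2 ^ (l + i) : ℚ) * 2 ^ (m + 2 * k)) =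
      linIndepCount l l * 2 ^ ((l + (m + 2 * k)) * l) :=
    prod_range_mul_two_pow fun _ => by rw [four_pow_eq]; ring
  have hGL : linIndepCount (k + l) (k + l) =
      linIndepCount (k + l) k * ∏ i ∈ range l, ((2 : ℚ) ^ (k + l) - 2 ^ (k + i)) :=
    prod_range_add _ k l
  unfold MGN
  simp only [prod_range_zero, mul_one, add_zero]
  rw [hN₁, hN₂, hN₃, hD₁, hD₂, hD₃, hGL]
  have hm := linIndepCount_ne_zero (le_refl m)
  have hk := linIndepCount_ne_zero (le_refl k)
  have hl := linIndepCount_ne_zero (le_refl l)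
  field_simp
  ring

theorem MGN_swap_general (r s k l m : ℕ) (hs : s = k + l) :
    MGN r s m k l 0 = MGN r s m l k 0 := by
  subst hs
  refine mul_right_cancel₀ (pow_ne_zero (m * (k + l) + k * l) two_ne_zero) ?_
  rw [MGN_mul_two_pow, add_comm k l, mul_comm k l, MGN_mul_two_pow]
  ring

/-- Symmetry of the Mixed Generalized Gaussian Number: `N(r,s;m,k,l,0) = N(r,s;m,l,k,0)`
when `s = k + l`. -/
theorem MGN_swap (r s k l m : ℕ) (hm : m ≤ r) (hs : s = k + l) :
    MGN r s m k l 0 = MGN r s m l k 0 :=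
  MGN_swap_general r s k l m hs
end

section
/- Let α and r be integers with α ≥ 1 and r ≥ 2. Then N(α+1,r;1,1,1,0) = 4·N(α,r;1,1,1,0) + (2^r − 1)·(2^{r−1} − 1)·2^{3α+4(r−2)}. -/
/-!
For `k = (1,1,1,0)` every product in `N(α,r;k)` has a single factor, so
`N(α,r;1,1,1,0) = (2^α - 1) 4^α c(r)` with `c(r) = (2^r - 1)(2^r - 2) 16^r / 2^11` (`mgnRFactor`).
The recurrence is then the identity `(2^(α+1) - 1) 4^(α+1) = 4 (2^α - 1) 4^α + 4 · 8^α`,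
together with `4 · 8^α c(r) = (2^r - 1)(2^(r-1) - 1) 2^(3α + 4(r-2))` for `r ≥ 2`.
-/

open Finset

def mgnRFactor (b : ℕ) : ℚ := (2 ^ b - 1) * (2 ^ b - 2) * 16 ^ b / 2 ^ 11

theorem MGN_one_one_one_zero (a b : ℕ) :
    MGN a b 1 1 1 0 = (2 ^ a - 1) * 4 ^ a * mgnRFactor b := by
  simp only [MGN, mgnRFactor, prod_range_one, prod_range_zero]
  rw [show (4 : ℚ) = 2 ^ 2 by norm_num, show (8 : ℚ) = 2 ^ 3 by norm_num,
    show (16 : ℚ) = 2 ^ 4 by norm_num]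
  simp only [← pow_mul, pow_add]
  field_simp
  ring

theorem two_pow_succ_sub_one_mul_four_pow_succ {R : Type*} [CommRing R] (a : ℕ) :
    ((2 : R) ^ (a + 1) - 1) * 4 ^ (a + 1) = 4 * ((2 ^ a - 1) * 4 ^ a) + 4 * 8 ^ a := by
  rw [show (8 : R) = 2 * 4 by norm_num, mul_pow]
  ring

theorem four_mul_eight_pow_mul_mgnRFactor (a s : ℕ) :
    4 * 8 ^ a * mgnRFactor (s + 2) =
      (2 ^ (s + 2) - 1) * (2 ^ (s + 1) - 1) * 2 ^ (3 * a + 4 * s) := by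
  rw [mgnRFactor, show (8 : ℚ) = 2 ^ 3 by norm_num, show (16 : ℚ) = 2 ^ 4 by norm_num]
  simp only [← pow_mul, pow_add]
  field_simp
  ring

theorem MGN_recurrence_general (α r : ℕ) (hr : 2 ≤ r) :
    MGN (α + 1) r 1 1 1 0 =
      4 * MGN α r 1 1 1 0 +
        ((2 : ℚ) ^ r - 1) * (2 ^ (r - 1) - 1) * 2 ^ (3 * α + 4 * (r - 2)) := by
  obtain ⟨s, rfl⟩ : ∃ s, r = s + 2 := ⟨r - 2, by omega⟩
  rw [MGN_one_one_one_zero, MGN_one_one_one_zero, two_pow_succ_sub_one_mul_four_pow_succ,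
    Nat.add_sub_cancel, show s + 2 - 1 = s + 1 from rfl, ← four_mul_eight_pow_mul_mgnRFactor]
  ring

/-- Recurrence: `N(α+1,r;1,1,1,0) = 4·N(α,r;1,1,1,0) + (2^r-1)·(2^(r-1)-1)·2^(3α+4(r-2))`
for `α ≥ 1` and `r ≥ 2`. -/
theorem MGN_recurrence (α r : ℕ) (hα : 1 ≤ α) (hr : 2 ≤ r) :
    MGN (α + 1) r 1 1 1 0 =
      4 * MGN α r 1 1 1 0 +
        ((2 : ℚ) ^ r - 1) * (2 ^ (r - 1) - 1) * 2 ^ (3 * α + 4 * (r - 2)) :=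
  MGN_recurrence_general α r hr
end

section
/- Let α, β, k₁, k₂, k₃ be nonnegative integers with α ≥ 1 and β = k₁ + k₂ + k₃. Then N(α,β;α,k₁,k₂,k₃) = N(1,β;1,k₁,k₂,k₃). -/
open Finset

lemma two_pow_sub_two_pow_ne_zero {m n : ℕ} (h : n < m) : (2 : ℚ) ^ m - 2 ^ n ≠ 0 :=
  sub_ne_zero.mpr (pow_right_strictMono₀ one_lt_two h).ne'

lemma prod_range_two_pow_add_sub_ne_zero (c n : ℕ) :
    ∏ i ∈ range n, ((2 : ℚ) ^ (c + n) - 2 ^ (c + i)) ≠ 0 :=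
  prod_ne_zero_iff.mpr fun _ hi => two_pow_sub_two_pow_ne_zero (by simpa using hi)

lemma prod_range_eight_pow_sub_ne_zero (n : ℕ) :
    ∏ i ∈ range n, ((8 : ℚ) ^ n - 4 ^ n * 2 ^ i) ≠ 0 := by
  convert prod_range_two_pow_add_sub_ne_zero (2 * n) n using 2 with i
  rw [pow_add, pow_add, pow_mul, ← mul_pow]
  norm_num

lemma prod_range_four_pow_sub_ne_zero (n : ℕ) :
    ∏ i ∈ range n, ((4 : ℚ) ^ n - 2 ^ (n + i)) ≠ 0 := by
  convert prod_range_two_pow_add_sub_ne_zero n n using 3 with i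
  rw [← two_mul, pow_mul]
  norm_num

/-- For `β = k₁ + k₂ + k₃` the first denominator product is `2^(βa) ∏ (2^a - 2^i)`, which cancels
the first numerator product; the powers `2^(a k₁)`, `2^(a k₂)` cancel between `N₂, N₃` and
`D₂, D₃`, and `N₄ = D₄`. So nothing depending on `a` is left. -/
lemma MGN_full_eq (a k₁ k₂ k₃ : ℕ) :
    MGN a (k₁ + k₂ + k₃) a k₁ k₂ k₃ =
      ((∏ i ∈ range k₁, ((8 : ℚ) ^ (k₁ + k₂ + k₃) - 4 ^ (k₁ + k₂ + k₃) * 2 ^ i)) *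
        ∏ i ∈ range k₂, ((4 : ℚ) ^ (k₁ + k₂ + k₃) - 2 ^ (k₁ + k₂ + k₃ + k₁ + i))) /
      (2 ^ ((2 * k₂ + k₃) * k₁ + (2 * k₁ + k₃) * k₂) *
        (∏ i ∈ range k₁, ((8 : ℚ) ^ k₁ - 4 ^ k₁ * 2 ^ i)) *
        ∏ i ∈ range k₂, ((4 : ℚ) ^ k₂ - 2 ^ (k₂ + i))) := by
  have hD₁ : ∏ i ∈ range a, ((2 : ℚ) ^ (a + k₁ + k₂ + k₃) - 2 ^ (k₁ + k₂ + k₃ + i)) =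
      ∏ i ∈ range a, (2 ^ (k₁ + k₂ + k₃) * ((2 : ℚ) ^ a - 2 ^ i)) :=
    prod_congr rfl fun i _ => by
      rw [show a + k₁ + k₂ + k₃ = k₁ + k₂ + k₃ + a by ring, pow_add, pow_add]; ring
  have hP := prod_range_two_pow_add_sub_ne_zero 0 a
  have hA := prod_range_eight_pow_sub_ne_zero k₁
  have hB := prod_range_four_pow_sub_ne_zero k₂
  have hC := prod_range_two_pow_add_sub_ne_zero (k₁ + k₂) k₃
  simp only [zero_add] at hP
  unfold MGN
  rw [hD₁]
  simp only [prod_mul_distrib, prod_const, card_range]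
  rw [div_eq_div_iff (by simp [*]) (by simp [*])]
  ring

theorem MGN_full_binary_part_general (α β k₁ k₂ k₃ : ℕ) (hβ : β = k₁ + k₂ + k₃) :
    MGN α β α k₁ k₂ k₃ = MGN 1 β 1 k₁ k₂ k₃ := by
  subst hβ
  rw [MGN_full_eq, MGN_full_eq]

/-- If `β = k₁ + k₂ + k₃` then `N(α,β;α,k₁,k₂,k₃) = N(1,β;1,k₁,k₂,k₃)` for all `α ≥ 1`. -/
theorem MGN_full_binary_part (α β k₁ k₂ k₃ : ℕ) (hα : 1 ≤ α) (hβ : β = k₁ + k₂ + k₃) :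
    MGN α β α k₁ k₂ k₃ = MGN 1 β 1 k₁ k₂ k₃ :=
  MGN_full_binary_part_general α β k₁ k₂ k₃ hβ
end

section
/- Let j and k be integers with j ≥ 1 and k ≥ 3. Then N(j,k;j,1,1,1) = 2^{(k−3)(j−1)} · N(1,k;1,1,1,1). -/
/-!
In `N(j,k;j,1,1,1)` the first factors contribute `2^(kj)·∏_{i<j}(2^j - 2^i)` upstairs and
`2^(3j)·∏_{i<j}(2^j - 2^i)` downstairs, while the remaining `j`-dependence is a factor `2^j` in
each of `N₂, N₃, D₂, D₃`, which cancels. Hence `N(j,k;j,1,1,1) = 2^((k-3)j)·N(0,k;0,1,1,1)`, and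
comparing with `j = 1` gives the claim.
-/

open Finset

theorem prod_pow_sub_pow_ne_zero {K : Type*} [Field K] [LinearOrder K] [IsStrictOrderedRing K]
    {q : K} (hq : 1 < q) (n : ℕ) : ∏ i ∈ range n, (q ^ n - q ^ i) ≠ 0 :=
  prod_ne_zero_iff.2 fun _ hi => sub_ne_zero.2 (pow_lt_pow_right₀ hq (mem_range.1 hi)).ne'

theorem MGN_self_one_one_one_eq_pow_mul (j c : ℕ) :
    MGN j (c + 3) j 1 1 1 = 2 ^ (c * j) * MGN 0 (c + 3) 0 1 1 1 := by
  set P := ∏ i ∈ range j, ((2 : ℚ) ^ j - 2 ^ i)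
  have hP : P ≠ 0 := prod_pow_sub_pow_ne_zero one_lt_two j
  have hnum : ∏ i ∈ range j, ((2 ^ j - 2 ^ i : ℚ) * 2 ^ (c + 3)) = P * 2 ^ ((c + 3) * j) := by
    rw [prod_mul_distrib, prod_const, card_range, ← pow_mul]
  have hden :
      ∏ i ∈ range j, ((2 : ℚ) ^ (j + 1 + 1 + 1) - 2 ^ (1 + 1 + 1 + i)) = 2 ^ (3 * j) * P := by
    rw [prod_congr rfl fun i _ => show (2 : ℚ) ^ (j + 1 + 1 + 1) - 2 ^ (1 + 1 + 1 + i)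
      = 2 ^ 3 * (2 ^ j - 2 ^ i) by ring, prod_mul_distrib, prod_const, card_range, ← pow_mul]
  unfold MGN
  simp only [prod_range_one, hnum, hden, range_zero, prod_empty]
  field_simp
  ring

/-- `N(j,k;j,1,1,1) = 2^((k-3)(j-1))·N(1,k;1,1,1,1)` for `j ≥ 1` and `k ≥ 3`. -/
theorem MGN_scaling (j k : ℕ) (hj : 1 ≤ j) (hk : 3 ≤ k) :
    MGN j k j 1 1 1 = 2 ^ ((k - 3) * (j - 1)) * MGN 1 k 1 1 1 1 := by
  obtain ⟨c, rfl⟩ : ∃ c, k = c + 3 := ⟨k - 3, by omega⟩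
  obtain ⟨d, rfl⟩ : ∃ d, j = d + 1 := ⟨j - 1, by omega⟩
  rw [MGN_self_one_one_one_eq_pow_mul, MGN_self_one_one_one_eq_pow_mul 1, ← mul_assoc, ← pow_add,
    Nat.add_sub_cancel, Nat.add_sub_cancel]
  ring
end

section
/- Let r and s be integers with r ≥ 1 and s ≥ 2. Then N(r,s;r,0,1,s−1) = N(r,s;r,0,s−1,1) = N(r,s;r,s−1,1,0) = N(r,s;r,1,s−1,0) = 2^s − 1. -/
/-! The blocks of `N` are products of the form `∏ i < k, (2^n - 2^i)` up to powers of two;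
writing `α = k₀ + d` and `β = k₁ + k₂ + k₃` and cancelling, one finds
`N(α,β;k₀,k₁,k₂,k₃) = 2^(d(k₁+k₂) + k₁k₃) [α k₀]₂ [β k₁]₂ [k₂+k₃ k₂]₂` with Gaussian binomials
at `q = 2`. The four numbers in question are then `[s 1]₂ = [s s-1]₂ = 2^s - 1`. -/

open Finset

/-- The number of ordered linearly independent `k`-tuples in `𝔽₂ⁿ`. -/
def frameCount (n k : ℕ) : ℚ := ∏ i ∈ range k, ((2 : ℚ) ^ n - 2 ^ i)

def gaussBinom (n k : ℕ) : ℚ := frameCount n k / frameCount k k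

lemma frameCount_pos {n k : ℕ} (h : k ≤ n) : 0 < frameCount n k :=
  prod_pos fun i hi => sub_pos.2 <| pow_lt_pow_right₀ one_lt_two <| by
    rw [mem_range] at hi; omega

lemma prod_range_two_pow_mul_sub (c m n k : ℕ) :
    ∏ i ∈ range k, ((2 : ℚ) ^ c * (2 ^ (m + n) - 2 ^ (m + i))) =
      2 ^ ((c + m) * k) * frameCount n k := by
  calc ∏ i ∈ range k, ((2 : ℚ) ^ c * (2 ^ (m + n) - 2 ^ (m + i)))
      = ∏ i ∈ range k, ((2 : ℚ) ^ (c + m) * (2 ^ n - 2 ^ i)) :=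
        prod_congr rfl fun i _ => by ring
    _ = _ := by rw [prod_mul_distrib, prod_const, card_range, ← pow_mul]; rfl

lemma frameCount_succ_left_self (n : ℕ) :
    frameCount (n + 1) n = (2 ^ (n + 1) - 1) * frameCount n n := by
  have peel_last : frameCount (n + 1) (n + 1) = frameCount (n + 1) n * 2 ^ n := by
    simp only [frameCount, prod_range_succ]
    ring
  have peel_first : frameCount (n + 1) (n + 1) = (2 ^ (n + 1) - 1) * (2 ^ n * frameCount n n) := by
    have shifted : ∏ i ∈ range n, ((2 : ℚ) ^ (n + 1) - 2 ^ (i + 1)) = 2 ^ n * frameCount n n := by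
      simpa [add_comm] using prod_range_two_pow_mul_sub 0 1 n n
    rw [frameCount, prod_range_succ', shifted, pow_zero, mul_comm]
  refine mul_left_cancel₀ (pow_ne_zero n two_ne_zero) ?_
  linear_combination peel_last.symm.trans peel_first

lemma gaussBinom_zero_right (n : ℕ) : gaussBinom n 0 = 1 := by
  simp [gaussBinom, frameCount]

lemma gaussBinom_self (n : ℕ) : gaussBinom n n = 1 :=
  div_self (frameCount_pos le_rfl).ne'

lemma gaussBinom_one_right (n : ℕ) : gaussBinom n 1 = 2 ^ n - 1 := by
  norm_num [gaussBinom, frameCount]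

lemma gaussBinom_succ_self (n : ℕ) : gaussBinom (n + 1) n = 2 ^ (n + 1) - 1 := by
  rw [gaussBinom, frameCount_succ_left_self, mul_div_assoc, div_self (frameCount_pos le_rfl).ne',
    mul_one]

theorem MGN_eq_gaussBinom {a b k₀ k₁ k₂ k₃ : ℕ} (h₀ : k₀ ≤ a) (h : k₁ + k₂ + k₃ = b) :
    MGN a b k₀ k₁ k₂ k₃ = 2 ^ ((a - k₀) * (k₁ + k₂) + k₁ * k₃) *
      gaussBinom a k₀ * gaussBinom b k₁ * gaussBinom (k₂ + k₃) k₂ := by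
  obtain ⟨d, rfl⟩ := Nat.exists_eq_add_of_le h₀
  have h8 : ∀ m, (8 : ℚ) ^ m = 2 ^ (3 * m) := fun m => by rw [pow_mul]; norm_num
  have h4 : ∀ m, (4 : ℚ) ^ m = 2 ^ (2 * m) := fun m => by rw [pow_mul]; norm_num
  have n₁ : ∏ i ∈ range k₀, ((2 ^ (k₀ + d) - 2 ^ i : ℚ) * 2 ^ b) =
      2 ^ ((b + 0) * k₀) * frameCount (k₀ + d) k₀ :=
    (prod_congr rfl fun i _ => by ring).trans (prod_range_two_pow_mul_sub _ _ _ _)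
  have n₂ : ∏ i ∈ range k₁, ((8 ^ b - 4 ^ b * 2 ^ i : ℚ) * 2 ^ (k₀ + d)) =
      2 ^ ((k₀ + d + 2 * b) * k₁) * frameCount b k₁ :=
    (prod_congr rfl fun i _ => by rw [h8, h4]; ring).trans (prod_range_two_pow_mul_sub _ _ _ _)
  have n₃ : ∏ i ∈ range k₂, ((4 ^ b - 2 ^ (b + k₁ + i) : ℚ) * 2 ^ (k₀ + d)) =
      2 ^ ((k₀ + d + (b + k₁)) * k₂) * frameCount (k₂ + k₃) k₂ :=
    (prod_congr rfl fun i _ => by rw [h4, ← h]; ring).trans (prod_range_two_pow_mul_sub _ _ _ _)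
  have n₄ : ∏ i ∈ range k₃, (2 ^ b - 2 ^ (k₁ + k₂ + i) : ℚ) =
      2 ^ ((0 + (k₁ + k₂)) * k₃) * frameCount k₃ k₃ :=
    (prod_congr rfl fun i _ => by rw [← h]; ring).trans (prod_range_two_pow_mul_sub _ _ _ _)
  have d₁ : ∏ i ∈ range k₀, (2 ^ (k₀ + k₁ + k₂ + k₃) - 2 ^ (k₁ + k₂ + k₃ + i) : ℚ) =
      2 ^ ((0 + b) * k₀) * frameCount k₀ k₀ :=
    (prod_congr rfl fun i _ => by rw [← h]; ring).trans (prod_range_two_pow_mul_sub _ _ _ _)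
  have d₂ : ∏ i ∈ range k₁, ((8 ^ k₁ - 4 ^ k₁ * 2 ^ i : ℚ) * 2 ^ (k₀ + 2 * k₂ + k₃)) =
      2 ^ ((k₀ + 2 * k₂ + k₃ + 2 * k₁) * k₁) * frameCount k₁ k₁ :=
    (prod_congr rfl fun i _ => by rw [h8, h4]; ring).trans (prod_range_two_pow_mul_sub _ _ _ _)
  have d₃ : ∏ i ∈ range k₂, ((4 ^ k₂ - 2 ^ (k₂ + i) : ℚ) * 2 ^ (k₀ + 2 * k₁ + k₃)) =
      2 ^ ((k₀ + 2 * k₁ + k₃ + k₂) * k₂) * frameCount k₂ k₂ :=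
    (prod_congr rfl fun i _ => by rw [h4]; ring).trans (prod_range_two_pow_mul_sub _ _ _ _)
  have d₄ : ∏ i ∈ range k₃, (2 ^ (k₁ + k₂ + k₃) - 2 ^ (k₁ + k₂ + i) : ℚ) =
      2 ^ ((0 + (k₁ + k₂)) * k₃) * frameCount k₃ k₃ :=
    (prod_congr rfl fun i _ => by ring).trans (prod_range_two_pow_mul_sub _ _ _ _)
  rw [MGN, n₁, n₂, n₃, n₄, d₁, d₂, d₃, d₄, gaussBinom, gaussBinom, gaussBinom,
    Nat.add_sub_cancel_left]
  subst h
  have := frameCount_pos (le_refl k₀)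
  have := frameCount_pos (le_refl k₁)
  have := frameCount_pos (le_refl k₂)
  have := frameCount_pos (le_refl k₃)
  field_simp
  ring

theorem MGN_almost_full_general (r s : ℕ) (hs : 2 ≤ s) :
    MGN r s r 0 1 (s - 1) = (2 : ℚ) ^ s - 1 ∧
    MGN r s r 0 (s - 1) 1 = (2 : ℚ) ^ s - 1 ∧
    MGN r s r (s - 1) 1 0 = (2 : ℚ) ^ s - 1 ∧
    MGN r s r 1 (s - 1) 0 = (2 : ℚ) ^ s - 1 := by
  obtain ⟨n, rfl⟩ : ∃ n, s = n + 1 := ⟨s - 1, by omega⟩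
  rw [Nat.add_sub_cancel]
  refine ⟨?_, ?_, ?_, ?_⟩ <;> rw [MGN_eq_gaussBinom le_rfl (by omega)] <;>
    simp [add_comm 1 n, gaussBinom_zero_right, gaussBinom_self, gaussBinom_one_right,
      gaussBinom_succ_self]

/-- `N(r,s;r,0,1,s-1) = N(r,s;r,0,s-1,1) = N(r,s;r,s-1,1,0) = N(r,s;r,1,s-1,0) = 2^s-1`
for `r ≥ 1` and `s ≥ 2`. -/
theorem MGN_almost_full (r s : ℕ) (hr : 1 ≤ r) (hs : 2 ≤ s) :
    MGN r s r 0 1 (s - 1) = (2 : ℚ) ^ s - 1 ∧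
    MGN r s r 0 (s - 1) 1 = (2 : ℚ) ^ s - 1 ∧
    MGN r s r (s - 1) 1 0 = (2 : ℚ) ^ s - 1 ∧
    MGN r s r 1 (s - 1) 0 = (2 : ℚ) ^ s - 1 :=
  MGN_almost_full_general r s hs
end

section
/- Let r, s, k be nonnegative integers with r ≥ 1 and k ≤ s. Then N(r,s;r,0,k,s−k) = N(r,s;r,s−k,k,0) and N(r,s;r,k,0,s−k) = N(r,s;r,s−k,0,k). -/
open Finset

def twoPowSubProd (a j n : ℕ) : ℚ := ∏ i ∈ range n, ((2 : ℚ) ^ a - 2 ^ (j + i))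

lemma twoPowSubProd_add (a j n : ℕ) :
    twoPowSubProd a 0 (j + n) = twoPowSubProd a 0 j * twoPowSubProd a j n := by
  simp only [twoPowSubProd, prod_range_add, zero_add]

lemma prod_range_eq_pow_mul_twoPowSubProd {g : ℕ → ℚ} {c a j n : ℕ}
    (h : ∀ i < n, g i = 2 ^ c * (2 ^ a - 2 ^ (j + i))) :
    ∏ i ∈ range n, g i = 2 ^ (c * n) * twoPowSubProd a j n := by
  rw [prod_congr rfl fun i hi => h i (mem_range.mp hi), prod_mul_distrib, prod_const, card_range,
    ← pow_mul, twoPowSubProd]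

lemma MGN_eq_zpow_mul (a b k₀ k₁ k₂ k₃ : ℕ) :
    MGN a b k₀ k₁ k₂ k₃ =
      2 ^ ((b * k₀ + (2 * b + a) * k₁ + (a + b) * k₂ : ℕ) -
          ((k₁ + k₂ + k₃) * k₀ + (2 * k₁ + k₀ + 2 * k₂ + k₃) * k₁ +
            (k₂ + k₀ + 2 * k₁ + k₃) * k₂ + (k₁ + k₂) * k₃ : ℕ) : ℤ) *
        twoPowSubProd a 0 k₀ * twoPowSubProd b 0 (k₁ + k₂ + k₃) /
        (twoPowSubProd k₀ 0 k₀ * twoPowSubProd k₁ 0 k₁ * twoPowSubProd k₂ 0 k₂ *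
          twoPowSubProd k₃ 0 k₃) := by
  have h4 : (4 : ℚ) = 2 ^ 2 := by norm_num
  have h8 : (8 : ℚ) = 2 ^ 3 := by norm_num
  rw [MGN,
    prod_range_eq_pow_mul_twoPowSubProd (c := b) (a := a) (j := 0) fun i _ => by ring,
    prod_range_eq_pow_mul_twoPowSubProd (c := 2 * b + a) (a := b) (j := 0) fun i _ => by
      simp only [h4, h8, ← pow_mul]; ring,
    prod_range_eq_pow_mul_twoPowSubProd (c := a + b) (a := b) (j := k₁) fun i _ => by
      simp only [h4, ← pow_mul]; ring,
    prod_range_eq_pow_mul_twoPowSubProd (c := 0) (a := b) (j := k₁ + k₂) fun i _ => by ring,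
    prod_range_eq_pow_mul_twoPowSubProd (c := k₁ + k₂ + k₃) (a := k₀) (j := 0) fun i _ => by ring,
    prod_range_eq_pow_mul_twoPowSubProd (c := 2 * k₁ + k₀ + 2 * k₂ + k₃) (a := k₁) (j := 0)
      fun i _ => by simp only [h4, h8, ← pow_mul]; ring,
    prod_range_eq_pow_mul_twoPowSubProd (c := k₂ + k₀ + 2 * k₁ + k₃) (a := k₂) (j := 0)
      fun i _ => by simp only [h4, ← pow_mul]; ring,
    prod_range_eq_pow_mul_twoPowSubProd (c := k₁ + k₂) (a := k₃) (j := 0) fun i _ => by ring,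
    twoPowSubProd_add b (k₁ + k₂) k₃, twoPowSubProd_add b k₁ k₂,
    zpow_sub₀ two_ne_zero, zpow_natCast, zpow_natCast]
  simp only [pow_add, pow_mul]
  field_simp
  ring

theorem MGN_swap_full_binary_general (r s k : ℕ) (hk : k ≤ s) :
    MGN r s r 0 k (s - k) = MGN r s r (s - k) k 0 ∧
    MGN r s r k 0 (s - k) = MGN r s r (s - k) 0 k := by
  obtain ⟨m, rfl⟩ : ∃ m, s = k + m := ⟨s - k, by omega⟩
  simp only [MGN_eq_zpow_mul, Nat.add_sub_cancel_left]
  constructor <;>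
  · push_cast
    ring_nf

/-- `N(r,s;r,0,k,s-k) = N(r,s;r,s-k,k,0)` and `N(r,s;r,k,0,s-k) = N(r,s;r,s-k,0,k)`. -/
theorem MGN_swap_full_binary (r s k : ℕ) (hr : 1 ≤ r) (hk : k ≤ s) :
    MGN r s r 0 k (s - k) = MGN r s r (s - k) k 0 ∧
    MGN r s r k 0 (s - k) = MGN r s r (s - k) 0 k :=
  MGN_swap_full_binary_general r s k hk
end
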